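/- arXiv:2502.04007 — 5 statements merged into one kernel-verified Lean document; each statement's English description precedes it below -/
import Mathlib

section
/- There exists a constant C > 0 such that the following holds for every γ ∈ ℝ, all real numbers E, F ≥ 0 and all integers k₁, k₂, k₃: if k_max > 8·max{|γ|E, |γ|F}, (k₁+k₂)(k₂+k₃)(k₁+k₃) ≠ 0, and |k_i| ≤ 8|k_j| for all i, j ∈ {1,2,3}, then Φ_{γ,E}^{(3)}(k₁,k₂,k₃) ≠ 0, Φ_{γ,F}^{(3)}(k₁,k₂,k₃) ≠ 0, |Φ_{γ,E}^{(3)}(k₁,k₂,k₃)| ≥ C⁻¹ · min{|k₁+k₂|·|k₁+k₃|, |k₁+k₂|·|k₂+k₃|, |k₁+k₃|·|k₂+k₃|} · k_max³, and |1/Φ_{γ,E}^{(3)}(k₁,k₂,k₃) − 1/Φ_{γ,F}^{(3)}(k₁,k₂,k₃)| ≤ C·|γ|·|E−F|·k_max^{−2} · min{1/|Φ_{γ,E}^{(3)}(k₁,k₂,k₃)|, 1/|Φ_{γ,F}^{(3)}(k₁,k₂,k₃)|}. -/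
/-- The linear symbol `φ_{γ,E}(k) = -i k⁵ + 2 i γ E k³`. -/
noncomputable def phiFn (γ E : ℝ) (k : ℤ) : ℂ :=
  -Complex.I * (k : ℂ) ^ 5 + 2 * Complex.I * (γ : ℂ) * (E : ℂ) * (k : ℂ) ^ 3

/-- The cubic phase function `Φ_{γ,E}^{(3)}`. -/
noncomputable def Phi3 (γ E : ℝ) (k₁ k₂ k₃ : ℤ) : ℂ :=
  phiFn γ E (k₁ + k₂ + k₃) - phiFn γ E k₁ - phiFn γ E k₂ - phiFn γ E k₃

lemma phi_decomp (γ E : ℝ) (k₁ k₂ k₃ : ℤ) :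
    Phi3 γ E k₁ k₂ k₃ = -Complex.I * (((k₁+k₂)*(k₂+k₃)*(k₁+k₃) : ℤ) : ℂ) *
      ((5*((k₁^2+k₂^2+k₃^2+k₁*k₂+k₂*k₃+k₁*k₃ : ℤ):ℝ) - 6*γ*E : ℝ) : ℂ) := by
  simp only [Phi3, phiFn]; push_cast; ring

lemma phi_abs (γ E : ℝ) (k₁ k₂ k₃ : ℤ) :
    ‖Phi3 γ E k₁ k₂ k₃‖ = |(((k₁+k₂)*(k₂+k₃)*(k₁+k₃) : ℤ) : ℝ)| *
      |5*((k₁^2+k₂^2+k₃^2+k₁*k₂+k₂*k₃+k₁*k₃ : ℤ):ℝ) - 6*γ*E| := by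
  rw [phi_decomp, norm_mul, norm_mul, Complex.norm_intCast, Complex.norm_real, Real.norm_eq_abs,
    norm_neg, Complex.norm_I, one_mul]

lemma min_mul_bound (a b c m : ℝ) (ha : 0 ≤ a) (hb : 0 ≤ b) (hc : 0 ≤ c)
    (h : 2*m ≤ a+b+c) :
    min (a*c) (min (a*b) (c*b)) * (2/3*m) ≤ a*b*c := by
  have h1 := min_le_left (a*c) (min (a*b) (c*b))
  have h2 := (min_le_right (a*c) (min (a*b) (c*b))).trans (min_le_left (a*b) (c*b))
  have h3 := (min_le_right (a*c) (min (a*b) (c*b))).trans (min_le_right (a*b) (c*b))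
  have h0 : 0 ≤ min (a*c) (min (a*b) (c*b)) :=
    le_min (mul_nonneg ha hc) (le_min (mul_nonneg ha hb) (mul_nonneg hc hb))
  rcases le_total a b with hab|hab <;> rcases le_total b c with hbc|hbc <;>
    rcases le_total a c with hac|hac <;>
    nlinarith [mul_nonneg ha hb, mul_nonneg hb hc, mul_nonneg ha hc]

set_option maxHeartbeats 2000000 in
theorem stmt0 :
    ∃ C : ℝ, 0 < C ∧
      ∀ (γ E F : ℝ) (k₁ k₂ k₃ : ℤ), 0 ≤ E → 0 ≤ F →
        ((max |k₁| (max |k₂| |k₃|) : ℤ) : ℝ) > 8 * max (|γ| * E) (|γ| * F) →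
        (k₁ + k₂) * (k₂ + k₃) * (k₁ + k₃) ≠ 0 →
        (|k₁| ≤ 8 * |k₂| ∧ |k₁| ≤ 8 * |k₃| ∧ |k₂| ≤ 8 * |k₁| ∧
          |k₂| ≤ 8 * |k₃| ∧ |k₃| ≤ 8 * |k₁| ∧ |k₃| ≤ 8 * |k₂|) →
        Phi3 γ E k₁ k₂ k₃ ≠ 0 ∧ Phi3 γ F k₁ k₂ k₃ ≠ 0 ∧
        C⁻¹ * ((min (|k₁ + k₂| * |k₁ + k₃|)
              (min (|k₁ + k₂| * |k₂ + k₃|) (|k₁ + k₃| * |k₂ + k₃|)) : ℤ) : ℝ) *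
            ((max |k₁| (max |k₂| |k₃|) : ℤ) : ℝ) ^ 3 ≤ ‖Phi3 γ E k₁ k₂ k₃‖ ∧
        ‖(Phi3 γ E k₁ k₂ k₃)⁻¹ - (Phi3 γ F k₁ k₂ k₃)⁻¹‖ ≤
          C * |γ| * |E - F| * (((max |k₁| (max |k₂| |k₃|) : ℤ) : ℝ) ^ 2)⁻¹ *
            min (‖Phi3 γ E k₁ k₂ k₃‖)⁻¹ (‖Phi3 γ F k₁ k₂ k₃‖)⁻¹ := by
  refine ⟨24, by norm_num, ?_⟩
  intro γ E F k₁ k₂ k₃ hE hF hMbig hP _hcomp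
  set s1 : ℤ := k₁ + k₂ with hs1
  set s2 : ℤ := k₂ + k₃ with hs2
  set s3 : ℤ := k₁ + k₃ with hs3
  set Q : ℤ := k₁^2+k₂^2+k₃^2+k₁*k₂+k₂*k₃+k₁*k₃ with hQdef
  set M : ℤ := max |k₁| (max |k₂| |k₃| ) with hMdef
  have h12 := left_ne_zero_of_mul hP
  have hs3' : s3 ≠ 0 := right_ne_zero_of_mul hP
  have hs1' : s1 ≠ 0 := left_ne_zero_of_mul h12
  have hs2' : s2 ≠ 0 := right_ne_zero_of_mul h12
  have hM1 : 1 ≤ M := by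
    simp only [hs1, hMdef, Int.abs_eq_natAbs] at hs1' ⊢; omega
  have key : 2 * M ≤ |s1| + |s2| + |s3| := by
    simp only [hs1, hs2, hs3, hMdef, Int.abs_eq_natAbs]; omega
  have hQ2 : s1^2 + s2^2 + s3^2 = 2*Q := by rw [hs1, hs2, hs3, hQdef]; ring
  have hQM : 2 * M^2 ≤ 3 * Q := by
    nlinarith [sq_abs s1, sq_abs s2, sq_abs s3, key, hQ2, hM1,
      sq_nonneg ( |s1|-|s2| ), sq_nonneg ( |s1|-|s3| ), sq_nonneg ( |s2|-|s3| ),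
      abs_nonneg s1, abs_nonneg s2, abs_nonneg s3]
  clear_value s1 s2 s3 Q M
  -- real versions
  have hm1 : (1:ℝ) ≤ (M:ℝ) := by exact_mod_cast hM1
  have hQr : (2/3 : ℝ) * (M:ℝ)^2 ≤ (Q:ℝ) := by
    have : (2:ℝ) * (M:ℝ)^2 ≤ 3 * (Q:ℝ) := by exact_mod_cast hQM
    linarith
  have hγE : 8*( |γ| * E ) < (M:ℝ) :=
    lt_of_le_of_lt (by gcongr; exact le_max_left _ _) hMbig
  have hγF : 8*( |γ| * F ) < (M:ℝ) :=
    lt_of_le_of_lt (by gcongr; exact le_max_right _ _) hMbig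
  have hgE : γ*E ≤ |γ| *E := mul_le_mul_of_nonneg_right (le_abs_self γ) hE
  have hgE' : -(γ*E) ≤ |γ| *E := by
    have h := neg_abs_le (γ * E)
    rw [abs_mul, abs_of_nonneg hE] at h; linarith
  have hgF' : -(γ*F) ≤ |γ| *F := by
    have h := neg_abs_le (γ * F)
    rw [abs_mul, abs_of_nonneg hF] at h; linarith
  have hMsq : (M:ℝ) ≤ (M:ℝ)^2 := by nlinarith
  have hgF : γ*F ≤ |γ| *F := mul_le_mul_of_nonneg_right (le_abs_self γ) hF
  have hgEnn : 0 ≤ |γ| *E := mul_nonneg (abs_nonneg γ) hE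
  have hgFnn : 0 ≤ |γ| *F := mul_nonneg (abs_nonneg γ) hF
  have hdE : (31/12)*(M:ℝ)^2 ≤ 5*(Q:ℝ) - 6*γ*E := by linarith [hγE, hgE', hQr, hMsq]
  have hdF : (31/12)*(M:ℝ)^2 ≤ 5*(Q:ℝ) - 6*γ*F := by linarith [hγF, hgF', hQr, hMsq]
  have hdEpos : (0:ℝ) < 5*(Q:ℝ) - 6*γ*E := by linarith [hdE, hm1]
  have hdFpos : (0:ℝ) < 5*(Q:ℝ) - 6*γ*F := by nlinarith [hdF, hm1]
  -- abs values of the phases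
  have habsP : |(((s1*s2*s3 : ℤ)):ℝ)| = |(s1:ℝ)| * |(s2:ℝ)| * |(s3:ℝ)| := by
    push_cast; rw [abs_mul, abs_mul]
  have hAE : ‖Phi3 γ E k₁ k₂ k₃‖
      = |(s1:ℝ)| * |(s2:ℝ)| * |(s3:ℝ)| * (5*(Q:ℝ) - 6*γ*E) := by
    rw [phi_abs, ← hs1, ← hs2, ← hs3, ← hQdef, habsP, abs_of_pos hdEpos]
  have hAF : ‖Phi3 γ F k₁ k₂ k₃‖
      = |(s1:ℝ)| * |(s2:ℝ)| * |(s3:ℝ)| * (5*(Q:ℝ) - 6*γ*F) := by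
    rw [phi_abs, ← hs1, ← hs2, ← hs3, ← hQdef, habsP, abs_of_pos hdFpos]
  have ha1 : (1:ℝ) ≤ |(s1:ℝ)| := by
    rw [← Int.cast_abs]; exact_mod_cast Int.one_le_abs hs1'
  have hb1 : (1:ℝ) ≤ |(s2:ℝ)| := by
    rw [← Int.cast_abs]; exact_mod_cast Int.one_le_abs hs2'
  have hc1 : (1:ℝ) ≤ |(s3:ℝ)| := by
    rw [← Int.cast_abs]; exact_mod_cast Int.one_le_abs hs3'
  have habc : (0:ℝ) < |(s1:ℝ)| * |(s2:ℝ)| * |(s3:ℝ)| :=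
    mul_pos (mul_pos (lt_of_lt_of_le zero_lt_one ha1) (lt_of_lt_of_le zero_lt_one hb1))
      (lt_of_lt_of_le zero_lt_one hc1)
  have hAEpos : 0 < ‖Phi3 γ E k₁ k₂ k₃‖ := by
    rw [hAE]; exact mul_pos habc hdEpos
  have hAFpos : 0 < ‖Phi3 γ F k₁ k₂ k₃‖ := by
    rw [hAF]; exact mul_pos habc hdFpos
  have hPE0 : Phi3 γ E k₁ k₂ k₃ ≠ 0 := norm_ne_zero_iff.mp hAEpos.ne'
  have hPF0 : Phi3 γ F k₁ k₂ k₃ ≠ 0 := norm_ne_zero_iff.mp hAFpos.ne'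
  refine ⟨hPE0, hPF0, ?_, ?_⟩
  · -- lower bound
    have keyr : 2*(M:ℝ) ≤ |(s1:ℝ)| + |(s2:ℝ)| + |(s3:ℝ)| := by
      have := key
      push_cast [← Int.cast_abs] at this ⊢
      exact_mod_cast this
    have hprod := min_mul_bound |(s1:ℝ)| |(s2:ℝ)| |(s3:ℝ)| (M:ℝ)
      (abs_nonneg _) (abs_nonneg _) (abs_nonneg _) keyr
    have hmn0 : (0:ℝ) ≤ min ( |(s1:ℝ)| * |(s3:ℝ)| ) (min ( |(s1:ℝ)| * |(s2:ℝ)| ) ( |(s3:ℝ)| * |(s2:ℝ)| )) :=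
      le_min (mul_nonneg (abs_nonneg _) (abs_nonneg _))
        (le_min (mul_nonneg (abs_nonneg _) (abs_nonneg _)) (mul_nonneg (abs_nonneg _) (abs_nonneg _)))
    rw [hAE]
    push_cast [Int.cast_min, Int.cast_abs]
    have e1 := mul_le_mul_of_nonneg_right hprod (sq_nonneg (M:ℝ))
    have e2 := mul_le_mul_of_nonneg_left hdE
      (by positivity : (0:ℝ) ≤ |(s1:ℝ)| * |(s2:ℝ)| * |(s3:ℝ)| )
    nlinarith [mul_nonneg hmn0 (by positivity : (0:ℝ) ≤ (M:ℝ)^3)]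
  · -- Lipschitz bound
    rw [inv_sub_inv hPE0 hPF0, norm_div, norm_mul]
    have hdiffeq : Phi3 γ F k₁ k₂ k₃ - Phi3 γ E k₁ k₂ k₃
        = -Complex.I * (((s1*s2*s3 : ℤ)):ℂ) * ((6*γ*(E-F) : ℝ):ℂ) := by
      rw [phi_decomp, phi_decomp, hs1, hs2, hs3]; push_cast; ring
    have hdiff : ‖Phi3 γ F k₁ k₂ k₃ - Phi3 γ E k₁ k₂ k₃‖
        = |(s1:ℝ)| * |(s2:ℝ)| * |(s3:ℝ)| * (6*( |γ| * |E-F| )) := by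
      rw [hdiffeq, norm_mul, norm_mul, Complex.norm_intCast, Complex.norm_real, Real.norm_eq_abs,
        norm_neg, Complex.norm_I, one_mul, habsP]
      rw [abs_mul, abs_mul, abs_of_nonneg (show (0:ℝ) ≤ 6 by norm_num)]
      ring
    rw [hdiff]
    have hKnn : (0:ℝ) ≤ 24 * |γ| * |E - F| * (((M:ℝ))^2)⁻¹ := by positivity
    rw [mul_min_of_nonneg _ _ hKnn]
    set a := |(s1:ℝ)| * |(s2:ℝ)| * |(s3:ℝ)| with hadef
    have ha0 : (0:ℝ) < a := by positivity
    have hG0 : (0:ℝ) ≤ |γ| * |E-F| := by positivity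
    refine le_min ?_ ?_
    · rw [div_le_iff₀ (by positivity)]
      have hrw : 24 * |γ| * |E - F| * ((M:ℝ)^2)⁻¹ * (‖Phi3 γ E k₁ k₂ k₃‖)⁻¹ *
          (‖Phi3 γ E k₁ k₂ k₃‖ * ‖Phi3 γ F k₁ k₂ k₃‖)
          = 24 * ( |γ| * |E - F| ) * ((M:ℝ)^2)⁻¹ * ‖Phi3 γ F k₁ k₂ k₃‖ := by
        field_simp
      rw [hrw, hAF]
      have hstep : 24 * ( |γ| * |E - F| ) * ((M:ℝ)^2)⁻¹ * (a * ((31/12)*(M:ℝ)^2))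
          ≤ 24 * ( |γ| * |E - F| ) * ((M:ℝ)^2)⁻¹ * (a * (5*(Q:ℝ) - 6*γ*F)) := by
        gcongr
      have hid : 24 * ( |γ| * |E - F| ) * ((M:ℝ)^2)⁻¹ * (a * ((31/12)*(M:ℝ)^2))
          = 62 * ( |γ| * |E - F| ) * a := by
        field_simp; ring
      nlinarith [mul_nonneg hG0 ha0.le]
    · rw [div_le_iff₀ (by positivity)]
      have hrw : 24 * |γ| * |E - F| * ((M:ℝ)^2)⁻¹ * (‖Phi3 γ F k₁ k₂ k₃‖)⁻¹ *
          (‖Phi3 γ E k₁ k₂ k₃‖ * ‖Phi3 γ F k₁ k₂ k₃‖)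
          = 24 * ( |γ| * |E - F| ) * ((M:ℝ)^2)⁻¹ * ‖Phi3 γ E k₁ k₂ k₃‖ := by
        field_simp
      rw [hrw, hAE]
      have hstep : 24 * ( |γ| * |E - F| ) * ((M:ℝ)^2)⁻¹ * (a * ((31/12)*(M:ℝ)^2))
          ≤ 24 * ( |γ| * |E - F| ) * ((M:ℝ)^2)⁻¹ * (a * (5*(Q:ℝ) - 6*γ*E)) := by
        gcongr
      have hid : 24 * ( |γ| * |E - F| ) * ((M:ℝ)^2)⁻¹ * (a * ((31/12)*(M:ℝ)^2))
          = 62 * ( |γ| * |E - F| ) * a := by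
        field_simp; ring
      nlinarith [mul_nonneg hG0 ha0.le]
end

section
/- There exists a constant C > 0 such that the following holds for every γ ∈ ℝ, all real numbers E, F ≥ 0 and all integers k₁,…,k₅: if k_max > 16·max{1, |γ|E, |γ|F} and |k₅| > 6|k₄| > 96·max{|k₁|,|k₂|,|k₃|}, then |Φ_{γ,E}^{(5)}(k₁,…,k₅)| > |k₄|·|k₅|⁴, |Φ_{γ,F}^{(5)}(k₁,…,k₅)| > |k₄|·|k₅|⁴, and |1/Φ_{γ,E}^{(5)}(k₁,…,k₅) − 1/Φ_{γ,F}^{(5)}(k₁,…,k₅)| ≤ C·|γ|·|E−F|·k_max^{−1} · min{1/|Φ_{γ,E}^{(5)}(k₁,…,k₅)|, 1/|Φ_{γ,F}^{(5)}(k₁,…,k₅)|}. -/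
/-- The quintic phase function `Φ_{γ,E}^{(5)}`. -/
noncomputable def Phi5 (γ E : ℝ) (k₁ k₂ k₃ k₄ k₅ : ℤ) : ℂ :=
  phiFn γ E (k₁ + k₂ + k₃ + k₄ + k₅) -
    (phiFn γ E k₁ + phiFn γ E k₂ + phiFn γ E k₃ + phiFn γ E k₄ + phiFn γ E k₅)

def T3r (x₁ x₂ x₃ x₄ x₅ : ℝ) : ℝ :=
  (x₁+x₂+x₃+x₄+x₅)^3 - (x₁^3+x₂^3+x₃^3+x₄^3+x₅^3)

def RRr (c x₁ x₂ x₃ x₄ x₅ : ℝ) : ℝ :=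
  2*c*T3r x₁ x₂ x₃ x₄ x₅
    - ((x₁+x₂+x₃+x₄+x₅)^5 - (x₁^5+x₂^5+x₃^5+x₄^5+x₅^5))

lemma phi_eq (γ E : ℝ) (k₁ k₂ k₃ k₄ k₅ : ℤ) :
    Phi5 γ E k₁ k₂ k₃ k₄ k₅ =
      Complex.I * ((RRr (γ*E) (k₁:ℝ) (k₂:ℝ) (k₃:ℝ) (k₄:ℝ) (k₅:ℝ) : ℝ) : ℂ) := by
  simp only [Phi5, phiFn, RRr, T3r]
  push_cast
  ring

lemma T3bound (x₁ x₂ x₃ x₄ x₅ : ℝ)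
    (h1 : 16*|x₁| ≤ |x₄|) (h2 : 16*|x₂| ≤ |x₄|) (h3 : 16*|x₃| ≤ |x₄|)
    (hmn : 6*|x₄| ≤ |x₅|) :
    |T3r x₁ x₂ x₃ x₄ x₅| ≤ 3*|x₅|^3 := by
  have a1 := abs_nonneg x₁
  have a2 := abs_nonneg x₂
  have a3 := abs_nonneg x₃
  have a4 := abs_nonneg x₄
  have a5 := abs_nonneg x₅
  have tri : ∀ u v : ℝ, |u - v| ≤ |u| + |v| := fun u v => by
    calc |u - v| = |u + -v| := by ring_nf
      _ ≤ |u| + |-v| := abs_add_le _ _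
      _ = |u| + |v| := by rw [abs_neg]
  have hS : |x₁+x₂+x₃+x₄+x₅| ≤ |x₁|+|x₂|+|x₃|+|x₄|+|x₅| := by
    have t1 := abs_add_le (x₁+x₂+x₃+x₄) x₅
    have t2 := abs_add_le (x₁+x₂+x₃) x₄
    have t3 := abs_add_le (x₁+x₂) x₃
    have t4 := abs_add_le x₁ x₂
    linarith
  have hsum : |x₁|+|x₂|+|x₃|+|x₄|+|x₅| ≤ (115/96)*|x₅| := by linarith
  have hS3 : |x₁+x₂+x₃+x₄+x₅|^3 ≤ ((115/96)*|x₅|)^3 :=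
    pow_le_pow_left₀ (abs_nonneg _) (hS.trans hsum) 3
  have e1 : (96*|x₁|)^3 ≤ |x₅|^3 := pow_le_pow_left₀ (by positivity) (by linarith) 3
  have e2 : (96*|x₂|)^3 ≤ |x₅|^3 := pow_le_pow_left₀ (by positivity) (by linarith) 3
  have e3 : (96*|x₃|)^3 ≤ |x₅|^3 := pow_le_pow_left₀ (by positivity) (by linarith) 3
  have e4 : (6*|x₄|)^3 ≤ |x₅|^3 := pow_le_pow_left₀ (by positivity) hmn 3
  have b1 : |x₁^3| = |x₁|^3 := abs_pow x₁ 3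
  have b2 : |x₂^3| = |x₂|^3 := abs_pow x₂ 3
  have b3 : |x₃^3| = |x₃|^3 := abs_pow x₃ 3
  have b4 : |x₄^3| = |x₄|^3 := abs_pow x₄ 3
  have b5 : |x₅^3| = |x₅|^3 := abs_pow x₅ 3
  have bS : |(x₁+x₂+x₃+x₄+x₅)^3| = |x₁+x₂+x₃+x₄+x₅|^3 := abs_pow _ 3
  have htri : |T3r x₁ x₂ x₃ x₄ x₅| ≤
      |(x₁+x₂+x₃+x₄+x₅)^3| + |x₁^3+x₂^3+x₃^3+x₄^3+x₅^3| := tri _ _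
  have hsum3 : |x₁^3+x₂^3+x₃^3+x₄^3+x₅^3| ≤ |x₁^3|+|x₂^3|+|x₃^3|+|x₄^3|+|x₅^3| := by
    have t1 := abs_add_le (x₁^3+x₂^3+x₃^3+x₄^3) (x₅^3)
    have t2 := abs_add_le (x₁^3+x₂^3+x₃^3) (x₄^3)
    have t3 := abs_add_le (x₁^3+x₂^3) (x₃^3)
    have t4 := abs_add_le (x₁^3) (x₂^3)
    linarith
  have p1 : 0 ≤ |x₁|^3 := by positivity
  have p2 : 0 ≤ |x₂|^3 := by positivity
  have p3 : 0 ≤ |x₃|^3 := by positivity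
  linarith

lemma core (x₁ x₂ x₃ x₄ x₅ c : ℝ)
    (h1 : 16*|x₁| ≤ |x₄|) (h2 : 16*|x₂| ≤ |x₄|) (h3 : 16*|x₃| ≤ |x₄|)
    (hm1 : 1 ≤ |x₄|) (hmn : 6*|x₄| ≤ |x₅|)
    (hcn : 16*|c| ≤ |x₅|) :
    |x₄| * |x₅|^4 < |RRr c x₁ x₂ x₃ x₄ x₅| := by
  have a1 := abs_nonneg x₁
  have a2 := abs_nonneg x₂
  have a3 := abs_nonneg x₃
  have a4 := abs_nonneg x₄
  have a5 := abs_nonneg x₅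
  have ac := abs_nonneg c
  have hn6 : 6 ≤ |x₅| := by linarith
  have hn0 : (0:ℝ) < |x₅| := by linarith
  have tri : ∀ u v : ℝ, |u - v| ≤ |u| + |v| := fun u v => by
    calc |u - v| = |u + -v| := by ring_nf
      _ ≤ |u| + |-v| := abs_add_le _ _
      _ = |u| + |v| := by rw [abs_neg]
  have hT3 : |T3r x₁ x₂ x₃ x₄ x₅| ≤ 3*|x₅|^3 := T3bound x₁ x₂ x₃ x₄ x₅ h1 h2 h3 hmn
  -- a = x₁+x₂+x₃+x₄
  have hA1 : |x₁+x₂+x₃+x₄| ≤ |x₁|+|x₂|+|x₃|+|x₄| := by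
    have t2 := abs_add_le (x₁+x₂+x₃) x₄
    have t3 := abs_add_le (x₁+x₂) x₃
    have t4 := abs_add_le x₁ x₂
    linarith
  have halb : 13*|x₄| ≤ 16*|x₁+x₂+x₃+x₄| := by
    have h4 : |x₄| ≤ |x₁+x₂+x₃+x₄| + (|x₁|+|x₂|+|x₃|) := by
      have e : x₄ = (x₁+x₂+x₃+x₄) - (x₁+x₂+x₃) := by ring
      have := tri (x₁+x₂+x₃+x₄) (x₁+x₂+x₃)
      have t3 := abs_add_le (x₁+x₂) x₃
      have t4 := abs_add_le x₁ x₂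
      rw [← e] at this
      linarith
    linarith
  have ha5 : 5*|x₁+x₂+x₃+x₄| ≤ |x₅| := by linarith
  -- B
  set a := x₁+x₂+x₃+x₄ with hadef
  set B := 5*x₅^4 + 10*x₅^3*a + 10*x₅^2*a^2 + 5*x₅*a^3 + a^4 with hBdef
  have hx2 : x₅^2 = |x₅|^2 := (sq_abs x₅).symm
  have hx4 : x₅^4 = |x₅|^4 := by
    have e : x₅^4 = (x₅^2)^2 := by ring
    rw [e, hx2]; ring
  have hb1 : -(|x₅|^3*|a|) ≤ x₅^3*a := by
    have e : |x₅^3*a| = |x₅|^3*|a| := by rw [abs_mul, abs_pow]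
    linarith [neg_abs_le (x₅^3*a), e.ge, e.le]
  have hb2 : -(|x₅| * |a|^3) ≤ x₅*a^3 := by
    have e : |x₅*a^3| = |x₅| * |a|^3 := by rw [abs_mul, abs_pow]
    linarith [neg_abs_le (x₅*a^3)]
  have e1 : |x₅|^3*(5*|a|) ≤ |x₅|^3*|x₅| :=
    mul_le_mul_of_nonneg_left ha5 (by positivity)
  have e2 : (5*|a|)^3 ≤ |x₅|^3 := pow_le_pow_left₀ (by positivity) ha5 3
  have e2' : |x₅| * (125*|a|^3) ≤ |x₅| * |x₅|^3 :=
    mul_le_mul_of_nonneg_left (by linarith) hn0.le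
  have sq1 : (0:ℝ) ≤ x₅^2*a^2 := by positivity
  have sq2 : (0:ℝ) ≤ a^4 := by positivity
  have hB : 296*|x₅|^4 ≤ 100*B := by
    rw [hBdef]
    linarith
  have hB0 : (0:ℝ) ≤ B := by nlinarith [pow_nonneg hn0.le 4]
  have habB : |a*B| = |a| *B := by rw [abs_mul, abs_of_nonneg hB0]
  have hlow : 13*|x₄| *(296*|x₅|^4) ≤ (16*|a|)*(100*B) :=
    mul_le_mul halb hB (by positivity) (by positivity)
  -- Q bound
  have q1 : |x₁|^5 ≤ |x₄|^5 := pow_le_pow_left₀ a1 (by linarith) 5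
  have q2 : |x₂|^5 ≤ |x₄|^5 := pow_le_pow_left₀ a2 (by linarith) 5
  have q3 : |x₃|^5 ≤ |x₄|^5 := pow_le_pow_left₀ a3 (by linarith) 5
  have hQ : |x₁^5+x₂^5+x₃^5+x₄^5| ≤ 4*|x₄|^5 := by
    have t1 := abs_add_le (x₁^5+x₂^5+x₃^5) (x₄^5)
    have t2 := abs_add_le (x₁^5+x₂^5) (x₃^5)
    have t3 := abs_add_le (x₁^5) (x₂^5)
    have b1 : |x₁^5| = |x₁|^5 := abs_pow x₁ 5
    have b2 : |x₂^5| = |x₂|^5 := abs_pow x₂ 5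
    have b3 : |x₃^5| = |x₃|^5 := abs_pow x₃ 5
    have b4 : |x₄^5| = |x₄|^5 := abs_pow x₄ 5
    linarith
  have hm4 : (6*|x₄|)^4 ≤ |x₅|^4 := pow_le_pow_left₀ (by positivity) hmn 4
  have hq' : |x₄| *(1296*|x₄|^4) ≤ |x₄| * |x₅|^4 :=
    mul_le_mul_of_nonneg_left (by linarith) a4
  -- 2c * T3 bound
  have hcT : |2*c*T3r x₁ x₂ x₃ x₄ x₅| ≤ (3/8)*|x₅|^4 := by
    have e : |2*c*T3r x₁ x₂ x₃ x₄ x₅| = 2*|c| * |T3r x₁ x₂ x₃ x₄ x₅| := by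
      rw [abs_mul, abs_mul, abs_two]
    have h16 : (16*|c|)*|T3r x₁ x₂ x₃ x₄ x₅| ≤ |x₅| *(3*|x₅|^3) :=
      mul_le_mul hcn hT3 (abs_nonneg _) hn0.le
    have hxx : |x₅| *(3*|x₅|^3) = 3*|x₅|^4 := by ring
    rw [e]
    linarith [h16, hxx.le, hxx.ge]
  -- split
  have hsplit : |a*B| ≤ |2*c*T3r x₁ x₂ x₃ x₄ x₅| + |x₁^5+x₂^5+x₃^5+x₄^5|
      + |RRr c x₁ x₂ x₃ x₄ x₅| := by
    have e : a*B = (2*c*T3r x₁ x₂ x₃ x₄ x₅ + (x₁^5+x₂^5+x₃^5+x₄^5))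
        - RRr c x₁ x₂ x₃ x₄ x₅ := by
      rw [hBdef, hadef]; simp only [RRr, T3r]; ring
    rw [e]
    calc |(2*c*T3r x₁ x₂ x₃ x₄ x₅ + (x₁^5+x₂^5+x₃^5+x₄^5)) - RRr c x₁ x₂ x₃ x₄ x₅|
        ≤ |2*c*T3r x₁ x₂ x₃ x₄ x₅ + (x₁^5+x₂^5+x₃^5+x₄^5)| + |RRr c x₁ x₂ x₃ x₄ x₅| :=
          tri _ _
      _ ≤ _ := by linarith [abs_add_le (2*c*T3r x₁ x₂ x₃ x₄ x₅) (x₁^5+x₂^5+x₃^5+x₄^5)]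
  -- final
  have hmn4 : |x₅|^4 ≤ |x₄| * |x₅|^4 := by
    linarith [mul_nonneg (by linarith : (0:ℝ) ≤ |x₄| - 1) (pow_nonneg hn0.le 4)]
  have hpos : (0:ℝ) < |x₄| * |x₅|^4 := mul_pos (by linarith) (by positivity)
  linarith

theorem stmt3 :
    ∃ C : ℝ, 0 < C ∧
      ∀ (γ E F : ℝ) (k₁ k₂ k₃ k₄ k₅ : ℤ), 0 ≤ E → 0 ≤ F →
        ((max |k₁| (max |k₂| (max |k₃| (max |k₄| |k₅|))) : ℤ) : ℝ) >
          16 * max 1 (max (|γ| * E) (|γ| * F)) →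
        |k₅| > 6 * |k₄| →
        6 * |k₄| > 96 * max |k₁| (max |k₂| |k₃|) →
        ‖Phi5 γ E k₁ k₂ k₃ k₄ k₅‖ > ((|k₄| : ℤ) : ℝ) * ((|k₅| : ℤ) : ℝ) ^ 4 ∧
        ‖Phi5 γ F k₁ k₂ k₃ k₄ k₅‖ > ((|k₄| : ℤ) : ℝ) * ((|k₅| : ℤ) : ℝ) ^ 4 ∧
        ‖(Phi5 γ E k₁ k₂ k₃ k₄ k₅)⁻¹ - (Phi5 γ F k₁ k₂ k₃ k₄ k₅)⁻¹‖ ≤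
          C * |γ| * |E - F| * (((max |k₁| (max |k₂| (max |k₃| (max |k₄| |k₅|))) : ℤ) : ℝ))⁻¹ *
            min (‖Phi5 γ E k₁ k₂ k₃ k₄ k₅‖)⁻¹
              (‖Phi5 γ F k₁ k₂ k₃ k₄ k₅‖)⁻¹ := by
  refine ⟨260, by norm_num, ?_⟩
  intro γ E F k₁ k₂ k₃ k₄ k₅ hE hF hmax h54 h4M
  -- integer facts
  have a1 := abs_nonneg k₁
  have a2 := abs_nonneg k₂
  have a3 := abs_nonneg k₃
  have a4 := abs_nonneg k₄
  have mx1 : |k₁| ≤ max |k₁| (max |k₂| |k₃|) := le_max_left _ _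
  have mx2 : |k₂| ≤ max |k₁| (max |k₂| |k₃|) :=
    le_trans (le_max_left _ _) (le_max_right _ _)
  have mx3 : |k₃| ≤ max |k₁| (max |k₂| |k₃|) :=
    le_trans (le_max_right _ _) (le_max_right _ _)
  have h41 : 16*|k₁| ≤ |k₄| := by linarith
  have h42 : 16*|k₂| ≤ |k₄| := by linarith
  have h43 : 16*|k₃| ≤ |k₄| := by linarith
  have hk4pos : (0:ℤ) < |k₄| := by linarith
  have hk41 : (1:ℤ) ≤ |k₄| := hk4pos
  have h45 : |k₄| ≤ |k₅| := by linarith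
  have h15 : |k₁| ≤ |k₅| := by linarith
  have h25 : |k₂| ≤ |k₅| := by linarith
  have h35 : |k₃| ≤ |k₅| := by linarith
  have hm5 : max |k₁| (max |k₂| (max |k₃| (max |k₄| |k₅|))) = |k₅| := by
    rw [max_eq_right h45, max_eq_right h35, max_eq_right h25, max_eq_right h15]
  rw [hm5] at hmax ⊢
  simp only [Int.cast_abs] at hmax ⊢
  -- real facts
  have r41 : 16*|(k₁:ℝ)| ≤ |(k₄:ℝ)| := by exact_mod_cast h41
  have r42 : 16*|(k₂:ℝ)| ≤ |(k₄:ℝ)| := by exact_mod_cast h42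
  have r43 : 16*|(k₃:ℝ)| ≤ |(k₄:ℝ)| := by exact_mod_cast h43
  have r45 : 6*|(k₄:ℝ)| ≤ |(k₅:ℝ)| := by exact_mod_cast h54.le
  have rm1 : (1:ℝ) ≤ |(k₄:ℝ)| := by exact_mod_cast hk41
  have hgamE : |γ| *E ≤ max 1 (max (|γ| *E) (|γ| *F)) :=
    le_trans (le_max_left _ _) (le_max_right _ _)
  have hgamF : |γ| *F ≤ max 1 (max (|γ| *E) (|γ| *F)) :=
    le_trans (le_max_right _ _) (le_max_right _ _)
  have h1max : (1:ℝ) ≤ max 1 (max (|γ| *E) (|γ| *F)) := le_max_left _ _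
  have hn16 : (16:ℝ) < |(k₅:ℝ)| := by linarith
  have habgE : |γ*E| = |γ| *E := by rw [abs_mul, abs_of_nonneg hE]
  have habgF : |γ*F| = |γ| *F := by rw [abs_mul, abs_of_nonneg hF]
  have hcnE : 16*|γ*E| ≤ |(k₅:ℝ)| := by rw [habgE]; linarith
  have hcnF : 16*|γ*F| ≤ |(k₅:ℝ)| := by rw [habgF]; linarith
  -- apply core
  have HE := core (k₁:ℝ) (k₂:ℝ) (k₃:ℝ) (k₄:ℝ) (k₅:ℝ) (γ*E) r41 r42 r43 rm1 r45 hcnE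
  have HF := core (k₁:ℝ) (k₂:ℝ) (k₃:ℝ) (k₄:ℝ) (k₅:ℝ) (γ*F) r41 r42 r43 rm1 r45 hcnF
  have habsE : ‖Phi5 γ E k₁ k₂ k₃ k₄ k₅‖
      = |RRr (γ*E) (k₁:ℝ) (k₂:ℝ) (k₃:ℝ) (k₄:ℝ) (k₅:ℝ)| := by
    rw [phi_eq, norm_mul, Complex.norm_I, one_mul, Complex.norm_real, Real.norm_eq_abs]
  have habsF : ‖Phi5 γ F k₁ k₂ k₃ k₄ k₅‖
      = |RRr (γ*F) (k₁:ℝ) (k₂:ℝ) (k₃:ℝ) (k₄:ℝ) (k₅:ℝ)| := by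
    rw [phi_eq, norm_mul, Complex.norm_I, one_mul, Complex.norm_real, Real.norm_eq_abs]
  have P1 : |(k₄:ℝ)| * |(k₅:ℝ)|^4 < ‖Phi5 γ E k₁ k₂ k₃ k₄ k₅‖ := by
    rw [habsE]; exact HE
  have P2 : |(k₄:ℝ)| * |(k₅:ℝ)|^4 < ‖Phi5 γ F k₁ k₂ k₃ k₄ k₅‖ := by
    rw [habsF]; exact HF
  refine ⟨P1, P2, ?_⟩
  -- part 3
  have hn0 : (0:ℝ) < |(k₅:ℝ)| := by linarith
  have hn4 : (0:ℝ) < |(k₅:ℝ)|^4 := by positivity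
  have hmn4 : |(k₅:ℝ)|^4 ≤ |(k₄:ℝ)| * |(k₅:ℝ)|^4 := by
    linarith [mul_nonneg (by linarith : (0:ℝ) ≤ |(k₄:ℝ)| - 1) hn4.le]
  have haE0 : (0:ℝ) < ‖Phi5 γ E k₁ k₂ k₃ k₄ k₅‖ := by linarith
  have haF0 : (0:ℝ) < ‖Phi5 γ F k₁ k₂ k₃ k₄ k₅‖ := by linarith
  have hΦE : Phi5 γ E k₁ k₂ k₃ k₄ k₅ ≠ 0 := norm_pos_iff.mp haE0
  have hΦF : Phi5 γ F k₁ k₂ k₃ k₄ k₅ ≠ 0 := norm_pos_iff.mp haF0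
  have rT3 : |T3r (k₁:ℝ) (k₂:ℝ) (k₃:ℝ) (k₄:ℝ) (k₅:ℝ)| ≤ 3*|(k₅:ℝ)|^3 :=
    T3bound _ _ _ _ _ r41 r42 r43 r45
  have hdiff : (Phi5 γ E k₁ k₂ k₃ k₄ k₅)⁻¹ - (Phi5 γ F k₁ k₂ k₃ k₄ k₅)⁻¹
      = (Phi5 γ F k₁ k₂ k₃ k₄ k₅ - Phi5 γ E k₁ k₂ k₃ k₄ k₅) *
        ((Phi5 γ E k₁ k₂ k₃ k₄ k₅)⁻¹ * (Phi5 γ F k₁ k₂ k₃ k₄ k₅)⁻¹) := by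
    field_simp
  have hnum : ‖Phi5 γ F k₁ k₂ k₃ k₄ k₅ - Phi5 γ E k₁ k₂ k₃ k₄ k₅‖
      ≤ |γ| * |E-F| * (6*|(k₅:ℝ)|^3) := by
    have e : Phi5 γ F k₁ k₂ k₃ k₄ k₅ - Phi5 γ E k₁ k₂ k₃ k₄ k₅
        = Complex.I * (((2*(γ*(F-E))*T3r (k₁:ℝ) (k₂:ℝ) (k₃:ℝ) (k₄:ℝ) (k₅:ℝ) : ℝ)) : ℂ) := by
      rw [phi_eq, phi_eq]
      simp only [RRr]
      push_cast
      ring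
    rw [e, norm_mul, Complex.norm_I, one_mul, Complex.norm_real, Real.norm_eq_abs]
    have e2 : |2*(γ*(F-E))*T3r (k₁:ℝ) (k₂:ℝ) (k₃:ℝ) (k₄:ℝ) (k₅:ℝ)|
        = 2*(|γ| * |E-F|) * |T3r (k₁:ℝ) (k₂:ℝ) (k₃:ℝ) (k₄:ℝ) (k₅:ℝ)| := by
      rw [abs_mul, abs_mul, abs_mul, abs_two, abs_sub_comm F E]
    rw [e2]
    have hgg : (0:ℝ) ≤ 2*(|γ| * |E-F|) := by positivity
    calc 2*(|γ| * |E-F|) * |T3r (k₁:ℝ) (k₂:ℝ) (k₃:ℝ) (k₄:ℝ) (k₅:ℝ)|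
        ≤ 2*(|γ| * |E-F|) * (3*|(k₅:ℝ)|^3) := mul_le_mul_of_nonneg_left rT3 hgg
      _ = |γ| * |E-F| * (6*|(k₅:ℝ)|^3) := by ring
  have habsdiff : ‖(Phi5 γ E k₁ k₂ k₃ k₄ k₅)⁻¹ - (Phi5 γ F k₁ k₂ k₃ k₄ k₅)⁻¹‖
      = ‖Phi5 γ F k₁ k₂ k₃ k₄ k₅ - Phi5 γ E k₁ k₂ k₃ k₄ k₅‖
        * (‖Phi5 γ E k₁ k₂ k₃ k₄ k₅‖)⁻¹
        * (‖Phi5 γ F k₁ k₂ k₃ k₄ k₅‖)⁻¹ := by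
    rw [hdiff, norm_mul, norm_mul, norm_inv, norm_inv]
    ring
  set aE := ‖Phi5 γ E k₁ k₂ k₃ k₄ k₅‖ with haEdef
  set aF := ‖Phi5 γ F k₁ k₂ k₃ k₄ k₅‖ with haFdef
  have hIE : (0:ℝ) ≤ aE⁻¹ := inv_nonneg.mpr haE0.le
  have hIF : (0:ℝ) ≤ aF⁻¹ := inv_nonneg.mpr haF0.le
  have step1 : ‖(Phi5 γ E k₁ k₂ k₃ k₄ k₅)⁻¹ - (Phi5 γ F k₁ k₂ k₃ k₄ k₅)⁻¹‖
      ≤ (|γ| * |E-F| * (6*|(k₅:ℝ)|^3)) * aE⁻¹ * aF⁻¹ := by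
    rw [habsdiff]
    exact mul_le_mul_of_nonneg_right (mul_le_mul_of_nonneg_right hnum hIE) hIF
  have key : ∀ x : ℝ, 0 < x → |(k₅:ℝ)|^4 ≤ x → 6*|(k₅:ℝ)|^3 * x⁻¹ ≤ 260*|(k₅:ℝ)|⁻¹ := by
    intro x hx hx4
    have hinv : x⁻¹ ≤ (|(k₅:ℝ)|^4)⁻¹ := by
      apply inv_anti₀ hn4 hx4
    have heq : 6*|(k₅:ℝ)|^3 * (|(k₅:ℝ)|^4)⁻¹ = 6*|(k₅:ℝ)|⁻¹ := by
      field_simp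
    calc 6*|(k₅:ℝ)|^3 * x⁻¹ ≤ 6*|(k₅:ℝ)|^3 * (|(k₅:ℝ)|^4)⁻¹ :=
          mul_le_mul_of_nonneg_left hinv (by positivity)
      _ = 6*|(k₅:ℝ)|⁻¹ := heq
      _ ≤ 260*|(k₅:ℝ)|⁻¹ := by
          have : (0:ℝ) ≤ |(k₅:ℝ)|⁻¹ := inv_nonneg.mpr hn0.le
          linarith
  have hgg0 : (0:ℝ) ≤ |γ| * |E-F| := mul_nonneg (abs_nonneg _) (abs_nonneg _)
  rcases le_total aE aF with hab | hab
  · have hmin : min aE⁻¹ aF⁻¹ = aF⁻¹ :=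
      min_eq_right (inv_anti₀ haE0 hab)
    rw [hmin]
    calc ‖(Phi5 γ E k₁ k₂ k₃ k₄ k₅)⁻¹ - (Phi5 γ F k₁ k₂ k₃ k₄ k₅)⁻¹‖
        ≤ (|γ| * |E-F| * (6*|(k₅:ℝ)|^3)) * aE⁻¹ * aF⁻¹ := step1
      _ = (|γ| * |E-F| * aF⁻¹) * (6*|(k₅:ℝ)|^3 * aE⁻¹) := by ring
      _ ≤ (|γ| * |E-F| * aF⁻¹) * (260*|(k₅:ℝ)|⁻¹) := by
          apply mul_le_mul_of_nonneg_left (key aE haE0 (by linarith))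
          exact mul_nonneg hgg0 hIF
      _ = 260 * |γ| * |E-F| * |(k₅:ℝ)|⁻¹ * aF⁻¹ := by ring
  · have hmin : min aE⁻¹ aF⁻¹ = aE⁻¹ :=
      min_eq_left (inv_anti₀ haF0 hab)
    rw [hmin]
    calc ‖(Phi5 γ E k₁ k₂ k₃ k₄ k₅)⁻¹ - (Phi5 γ F k₁ k₂ k₃ k₄ k₅)⁻¹‖
        ≤ (|γ| * |E-F| * (6*|(k₅:ℝ)|^3)) * aE⁻¹ * aF⁻¹ := step1
      _ = (|γ| * |E-F| * aE⁻¹) * (6*|(k₅:ℝ)|^3 * aF⁻¹) := by ring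
      _ ≤ (|γ| * |E-F| * aE⁻¹) * (260*|(k₅:ℝ)|⁻¹) := by
          apply mul_le_mul_of_nonneg_left (key aF haF0 (by linarith))
          exact mul_nonneg hgg0 hIE
      _ = 260 * |γ| * |E-F| * |(k₅:ℝ)|⁻¹ * aE⁻¹ := by ring
end

section
/- There exists a constant C > 0 such that the following holds for every γ ∈ ℝ, all real numbers E, F ≥ 0 and all integers k₁,…,k₅: if k_max > 16·max{1, |γ|E, |γ|F}, |k₅|^{4/5} > 8³·max_{1≤j≤4}|k_j|, and k₁+k₂+k₃+k₄ ≠ 0, then |Φ_{γ,E}^{(5)}(k₁,…,k₅)| > |k₁+k₂+k₃+k₄|·|k₅|⁴, |Φ_{γ,F}^{(5)}(k₁,…,k₅)| > |k₁+k₂+k₃+k₄|·|k₅|⁴, and |1/Φ_{γ,E}^{(5)}(k₁,…,k₅) − 1/Φ_{γ,F}^{(5)}(k₁,…,k₅)| ≤ C·|γ|·|E−F|·k_max^{−1} · min{1/|Φ_{γ,E}^{(5)}(k₁,…,k₅)|, 1/|Φ_{γ,F}^{(5)}(k₁,…,k₅)|}. -/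
lemma phi5_eq (γ E : ℝ) (k₁ k₂ k₃ k₄ k₅ : ℤ) :
    Phi5 γ E k₁ k₂ k₃ k₄ k₅ = Complex.I *
      ((-(((k₁+k₂+k₃+k₄+k₅)^5 - (k₁^5+k₂^5+k₃^5+k₄^5+k₅^5) : ℤ) : ℝ)
        + 2*γ*E*(((k₁+k₂+k₃+k₄+k₅)^3 - (k₁^3+k₂^3+k₃^3+k₄^3+k₅^3) : ℤ) : ℝ) : ℝ) : ℂ) := by
  simp only [Phi5, phiFn]
  push_cast
  ring

lemma abs_neg_form (P g Q : ℝ) : |-P + g*Q| = |P - g*Q| := by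
  rw [show -P + g*Q = -(P - g*Q) from by ring, abs_neg]

lemma abs_phi5 (γ E : ℝ) (k₁ k₂ k₃ k₄ k₅ : ℤ) :
    ‖Phi5 γ E k₁ k₂ k₃ k₄ k₅‖ =
      |(((k₁+k₂+k₃+k₄+k₅)^5 - (k₁^5+k₂^5+k₃^5+k₄^5+k₅^5) : ℤ) : ℝ)
        - (2*γ*E)*(((k₁+k₂+k₃+k₄+k₅)^3 - (k₁^3+k₂^3+k₃^3+k₄^3+k₅^3) : ℤ) : ℝ)| := by
  rw [phi5_eq, norm_mul, Complex.norm_I, Complex.norm_real, Real.norm_eq_abs, one_mul, abs_neg_form]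

lemma diff_form (γ E F P Q : ℝ) : (-P + 2*γ*E*Q) - (-P + 2*γ*F*Q) = (2*(E-F)*γ)*Q := by ring

lemma abs_phi5_diff (γ E F : ℝ) (k₁ k₂ k₃ k₄ k₅ : ℤ) :
    ‖Phi5 γ E k₁ k₂ k₃ k₄ k₅ - Phi5 γ F k₁ k₂ k₃ k₄ k₅‖ =
      2 * |γ| * |E-F| * |(((k₁+k₂+k₃+k₄+k₅)^3 - (k₁^3+k₂^3+k₃^3+k₄^3+k₅^3) : ℤ) : ℝ)| := by
  rw [phi5_eq γ E, phi5_eq γ F, ← mul_sub, ← Complex.ofReal_sub, norm_mul, Complex.norm_I,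
    one_mul, Complex.norm_real, Real.norm_eq_abs, diff_form, abs_mul, abs_mul, abs_mul, abs_two]
  ring

lemma qbound (s t d S M N : ℝ) (hs : |s| = S) (ht : |t| = N) (hd : |d| ≤ 4*M^3)
    (hS1 : 1 ≤ S) (h128 : 128*S ≤ N) (hM1 : 1 ≤ M) (h512 : 512*M ≤ N) :
    |3*s*t^2 + 3*s^2*t + s^3 - d| ≤ 4*S*N^2 + 4*M^3 := by
  have h1 : |3*s*t^2 + 3*s^2*t + s^3 - d| ≤ |3*s*t^2| + |3*s^2*t| + |s^3| + |d| := by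
    calc |3*s*t^2 + 3*s^2*t + s^3 - d| ≤ |3*s*t^2 + 3*s^2*t + s^3| + |d| := abs_sub _ _
    _ ≤ |3*s*t^2 + 3*s^2*t| + |s^3| + |d| := by gcongr; exact abs_add_le _ _
    _ ≤ |3*s*t^2| + |3*s^2*t| + |s^3| + |d| := by gcongr; exact abs_add_le _ _
  have e1 : |3*s*t^2| = 3*S*N^2 := by rw [abs_mul, abs_mul, abs_pow, hs, ht]; norm_num
  have e2 : |3*s^2*t| = 3*S^2*N := by rw [abs_mul, abs_mul, abs_pow, hs, ht]; norm_num
  have e3 : |s^3| = S^3 := by rw [abs_pow, hs]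
  rw [e1, e2, e3] at h1
  have hN : 512 ≤ N := by nlinarith
  nlinarith [sq_nonneg S, sq_nonneg N, mul_nonneg (mul_nonneg (by linarith : (0:ℝ) ≤ S) (by linarith : (0:ℝ) ≤ S)) (by linarith : (0:ℝ) ≤ N),
    mul_le_mul_of_nonneg_left h128 (mul_nonneg (by linarith : (0:ℝ) ≤ S) (by linarith : (0:ℝ) ≤ N)),
    mul_le_mul_of_nonneg_left h128 (mul_nonneg (by linarith : (0:ℝ) ≤ S) (by linarith : (0:ℝ) ≤ S))]

lemma pbound (s t c S M N : ℝ) (hs : |s| = S) (ht : |t| = N) (hc : |c| ≤ 4*M^5)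
    (hS1 : 1 ≤ S) (h128 : 128*S ≤ N) (hM1 : 1 ≤ M) (hM5 : 512^5 * M^5 ≤ N^4) :
    |10*s^2*t^3 + 10*s^3*t^2 + 5*s^4*t + s^5 - c| ≤ S*N^4 := by
  have hS0 : (0:ℝ) ≤ S := by linarith
  have hN0 : (0:ℝ) ≤ N := by linarith
  have h1 : |10*s^2*t^3 + 10*s^3*t^2 + 5*s^4*t + s^5 - c|
      ≤ |10*s^2*t^3| + |10*s^3*t^2| + |5*s^4*t| + |s^5| + |c| := by
    calc |10*s^2*t^3 + 10*s^3*t^2 + 5*s^4*t + s^5 - c|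
        ≤ |10*s^2*t^3 + 10*s^3*t^2 + 5*s^4*t + s^5| + |c| := abs_sub _ _
      _ ≤ |10*s^2*t^3 + 10*s^3*t^2 + 5*s^4*t| + |s^5| + |c| := by gcongr; exact abs_add_le _ _
      _ ≤ |10*s^2*t^3 + 10*s^3*t^2| + |5*s^4*t| + |s^5| + |c| := by gcongr; exact abs_add_le _ _
      _ ≤ |10*s^2*t^3| + |10*s^3*t^2| + |5*s^4*t| + |s^5| + |c| := by gcongr; exact abs_add_le _ _
  have e1 : |10*s^2*t^3| = 10*S^2*N^3 := by rw [abs_mul, abs_mul, abs_pow, abs_pow, hs, ht]; norm_num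
  have e2 : |10*s^3*t^2| = 10*S^3*N^2 := by rw [abs_mul, abs_mul, abs_pow, abs_pow, hs, ht]; norm_num
  have e3 : |5*s^4*t| = 5*S^4*N := by rw [abs_mul, abs_mul, abs_pow, hs, ht]; norm_num
  have e4 : |s^5| = S^5 := by rw [abs_pow, hs]
  rw [e1, e2, e3, e4] at h1
  have hp2 : (128*S)^2 ≤ N^2 := pow_le_pow_left₀ (by linarith) h128 2
  have hp3 : (128*S)^3 ≤ N^3 := pow_le_pow_left₀ (by linarith) h128 3
  have hp4 : (128*S)^4 ≤ N^4 := pow_le_pow_left₀ (by linarith) h128 4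
  have hA : 10*S^2*N^3 ≤ (10/128)*(S*N^4) := by
    nlinarith [mul_le_mul_of_nonneg_left h128 (mul_nonneg hS0 (pow_nonneg hN0 3))]
  have hB : 10*S^3*N^2 ≤ (10/128^2)*(S*N^4) := by
    nlinarith [mul_le_mul_of_nonneg_left hp2 (mul_nonneg hS0 (pow_nonneg hN0 2))]
  have hC : 5*S^4*N ≤ (5/128^3)*(S*N^4) := by
    nlinarith [mul_le_mul_of_nonneg_left hp3 (mul_nonneg hS0 hN0)]
  have hD : S^5 ≤ (1/128^4)*(S*N^4) := by
    nlinarith [mul_le_mul_of_nonneg_left hp4 hS0]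
  have hE : 4*M^5 ≤ (4/512^5)*(S*N^4) := by
    nlinarith [mul_le_mul_of_nonneg_left hM5 hS0, pow_nonneg hN0 4]
  have hSN : 0 ≤ S*N^4 := mul_nonneg hS0 (pow_nonneg hN0 4)
  linarith

lemma core_lower (P Q g s t S M N : ℝ) (hs : |s| = S) (ht : |t| = N)
    (hR : |P - 5*s*t^4| ≤ S*N^4) (hQ : |Q| ≤ 4*S*N^2 + 4*M^3)
    (hg : |g| ≤ N/8) (hS1 : 1 ≤ S) (hM1 : 1 ≤ M) (h512 : 512*M ≤ N) :
    3*(S*N^4) ≤ |P - g*Q| := by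
  have hS0 : (0:ℝ) ≤ S := by linarith
  have hN0 : (0:ℝ) ≤ N := by linarith
  have hM0 : (0:ℝ) ≤ M := by linarith
  have e5 : |5*s*t^4| = 5*S*N^4 := by rw [abs_mul, abs_mul, abs_pow, hs, ht]; norm_num
  have tri : |5*s*t^4| ≤ |P - g*Q| + (|P - 5*s*t^4| + |g*Q|) := by
    calc |5*s*t^4| = |(P - g*Q) - ((P - 5*s*t^4) - g*Q)| := by ring_nf
      _ ≤ |P - g*Q| + |(P - 5*s*t^4) - g*Q| := abs_sub _ _
      _ ≤ |P - g*Q| + (|P - 5*s*t^4| + |g*Q|) := by gcongr; exact abs_sub _ _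
  have hgQ : |g*Q| ≤ (N/8)*(4*S*N^2 + 4*M^3) := by
    rw [abs_mul]
    exact mul_le_mul hg hQ (abs_nonneg _) (by linarith)
  have hp3 : (512*M)^3 ≤ N^3 := pow_le_pow_left₀ (by linarith) h512 3
  have hMN : M^3*N ≤ (1/512^3)*(S*N^4) := by
    nlinarith [mul_le_mul_of_nonneg_left hp3 hN0, pow_nonneg hN0 4,
      mul_le_mul_of_nonneg_right hS1 (mul_nonneg (pow_nonneg hN0 3) hN0)]
  have hSN3 : S*N^3 ≤ (1/512)*(S*N^4) := by
    nlinarith [mul_le_mul_of_nonneg_left h512 (mul_nonneg hS0 (pow_nonneg hN0 3)),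
      mul_le_mul_of_nonneg_right hM1 (mul_nonneg hS0 (pow_nonneg hN0 3))]
  rw [e5] at tri
  nlinarith [tri, hgQ, hR, hMN, hSN3, mul_nonneg hS0 (pow_nonneg hN0 4)]

lemma key_qn (Qa S M N : ℝ) (hQ0 : 0 ≤ Qa) (hQ : Qa ≤ 4*S*N^2 + 4*M^3)
    (hS1 : 1 ≤ S) (hM1 : 1 ≤ M) (h512 : 512*M ≤ N) : 2*Qa*N ≤ 3*(S*N^4) := by
  have hS0 : (0:ℝ) ≤ S := by linarith
  have hN0 : (0:ℝ) ≤ N := by linarith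
  have hp3 : (512*M)^3 ≤ N^3 := pow_le_pow_left₀ (by linarith) h512 3
  have hMN : M^3*N ≤ (1/512^3)*(S*N^4) := by
    nlinarith [mul_le_mul_of_nonneg_left hp3 hN0, pow_nonneg hN0 4,
      mul_le_mul_of_nonneg_right hS1 (mul_nonneg (pow_nonneg hN0 3) hN0)]
  have hSN3 : S*N^3 ≤ (1/512)*(S*N^4) := by
    nlinarith [mul_le_mul_of_nonneg_left h512 (mul_nonneg hS0 (pow_nonneg hN0 3)),
      mul_le_mul_of_nonneg_right hM1 (mul_nonneg hS0 (pow_nonneg hN0 3))]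
  nlinarith [mul_le_mul_of_nonneg_left hQ (by linarith : (0:ℝ) ≤ 2*N),
    mul_nonneg hS0 (pow_nonneg hN0 4)]

theorem stmt4 :
    ∃ C : ℝ, 0 < C ∧
      ∀ (γ E F : ℝ) (k₁ k₂ k₃ k₄ k₅ : ℤ), 0 ≤ E → 0 ≤ F →
        ((max |k₁| (max |k₂| (max |k₃| (max |k₄| |k₅|))) : ℤ) : ℝ) >
          16 * max 1 (max (|γ| * E) (|γ| * F)) →
        ((|k₅| : ℤ) : ℝ) ^ ((4 : ℝ) / 5) >
          8 ^ 3 * ((max |k₁| (max |k₂| (max |k₃| |k₄|)) : ℤ) : ℝ) →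
        k₁ + k₂ + k₃ + k₄ ≠ 0 →
        ‖Phi5 γ E k₁ k₂ k₃ k₄ k₅‖ >
          ((|k₁ + k₂ + k₃ + k₄| : ℤ) : ℝ) * ((|k₅| : ℤ) : ℝ) ^ 4 ∧
        ‖Phi5 γ F k₁ k₂ k₃ k₄ k₅‖ >
          ((|k₁ + k₂ + k₃ + k₄| : ℤ) : ℝ) * ((|k₅| : ℤ) : ℝ) ^ 4 ∧
        ‖(Phi5 γ E k₁ k₂ k₃ k₄ k₅)⁻¹ - (Phi5 γ F k₁ k₂ k₃ k₄ k₅)⁻¹‖ ≤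
          C * |γ| * |E - F| * (((max |k₁| (max |k₂| (max |k₃| (max |k₄| |k₅|))) : ℤ) : ℝ))⁻¹ *
            min (‖Phi5 γ E k₁ k₂ k₃ k₄ k₅‖)⁻¹
              (‖Phi5 γ F k₁ k₂ k₃ k₄ k₅‖)⁻¹ := by
  refine ⟨1, one_pos, ?_⟩
  intro γ E F k₁ k₂ k₃ k₄ k₅ hE hF h1 h2 hne
  set m : ℤ := max |k₁| (max |k₂| (max |k₃| |k₄|)) with hm_def
  have hk1 : |k₁| ≤ m := le_max_left _ _
  have hk2 : |k₂| ≤ m := le_trans (le_max_left _ _) (le_max_right _ _)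
  have hk3 : |k₃| ≤ m := le_trans (le_trans (le_max_left _ _) (le_max_right _ _)) (le_max_right _ _)
  have hk4 : |k₄| ≤ m := le_trans (le_trans (le_max_right _ _) (le_max_right _ _)) (le_max_right _ _)
  have hs1 : 1 ≤ |k₁+k₂+k₃+k₄| := Int.one_le_abs hne
  have hs4m : |k₁+k₂+k₃+k₄| ≤ 4*m := by
    calc |k₁+k₂+k₃+k₄| ≤ |k₁+k₂+k₃| + |k₄| := abs_add_le _ _
      _ ≤ |k₁+k₂| + |k₃| + |k₄| := by gcongr; exact abs_add_le _ _
      _ ≤ |k₁| + |k₂| + |k₃| + |k₄| := by gcongr; exact abs_add_le _ _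
      _ ≤ 4*m := by omega
  have hm1 : 1 ≤ m := by omega
  set S : ℝ := ((|k₁+k₂+k₃+k₄| : ℤ) : ℝ) with hS_def
  set N : ℝ := ((|k₅| : ℤ) : ℝ) with hN_def
  set M : ℝ := ((m : ℤ) : ℝ) with hM_def
  have hS1 : (1:ℝ) ≤ S := by rw [hS_def]; exact_mod_cast hs1
  have hSM : S ≤ 4*M := by rw [hS_def, hM_def]; exact_mod_cast hs4m
  have hM1 : (1:ℝ) ≤ M := by rw [hM_def]; exact_mod_cast hm1
  have hN0 : (0:ℝ) ≤ N := by rw [hN_def]; exact_mod_cast abs_nonneg k₅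
  have h2' : N ^ ((4:ℝ)/5) > 512 * M := by norm_num at h2; exact h2
  have hN1 : 1 < N := by
    by_contra hcon
    push_neg at hcon
    have : N ^ ((4:ℝ)/5) ≤ 1 := Real.rpow_le_one hN0 hcon (by norm_num)
    nlinarith
  have h512 : 512*M ≤ N := by
    have h' : N ^ ((4:ℝ)/5) ≤ N ^ (1:ℝ) :=
      Real.rpow_le_rpow_of_exponent_le hN1.le (by norm_num)
    rw [Real.rpow_one] at h'
    linarith
  have h128 : 128*S ≤ N := by linarith
  have hM5 : 512^5 * M^5 ≤ N^4 := by
    have e : (N ^ ((4:ℝ)/5))^(5:ℕ) = N^(4:ℕ) := by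
      rw [← Real.rpow_natCast (N ^ ((4:ℝ)/5)) 5, ← Real.rpow_mul hN0,
        show (4:ℝ)/5 * ((5:ℕ):ℝ) = ((4:ℕ):ℝ) by norm_num, Real.rpow_natCast]
    have h := pow_le_pow_left₀ (by linarith : (0:ℝ) ≤ 512*M) h2'.le 5
    rw [e] at h
    calc 512^5 * M^5 = (512*M)^5 := by ring
      _ ≤ N^4 := h
  have hmk5 : m < |k₅| := by
    have : M < N := by linarith
    rw [hM_def, hN_def] at this
    exact_mod_cast this
  have hmax : max |k₁| (max |k₂| (max |k₃| (max |k₄| |k₅|))) = |k₅| := by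
    rw [max_eq_right (le_trans hk4 hmk5.le), max_eq_right (le_trans hk3 hmk5.le),
      max_eq_right (le_trans hk2 hmk5.le), max_eq_right (le_trans hk1 hmk5.le)]
  rw [hmax] at h1
  rw [← hN_def] at h1
  have hN16 : 16 < N := by
    have h' : (1:ℝ) ≤ max 1 (max (|γ| * E) (|γ| * F)) := le_max_left _ _
    nlinarith
  have hNpos : (0:ℝ) < N := by linarith
  have hgE : |2*γ*E| ≤ N/8 := by
    have h' : |γ| * E ≤ max 1 (max (|γ| * E) (|γ| * F)) :=
      le_trans (le_max_left _ _) (le_max_right _ _)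
    have e : |2*γ*E| = 2 * (|γ| * E) := by
      rw [abs_mul, abs_mul, abs_two, abs_of_nonneg hE]; ring
    rw [e]
    linarith
  have hgF : |2*γ*F| ≤ N/8 := by
    have h' : |γ| * F ≤ max 1 (max (|γ| * E) (|γ| * F)) :=
      le_trans (le_max_right _ _) (le_max_right _ _)
    have e : |2*γ*F| = 2 * (|γ| * F) := by
      rw [abs_mul, abs_mul, abs_two, abs_of_nonneg hF]; ring
    rw [e]
    linarith
  -- integer sum bounds
  have hc5 : |k₁^5+k₂^5+k₃^5+k₄^5| ≤ 4*m^5 := by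
    have b1 : |k₁^5| ≤ m^5 := by rw [abs_pow]; exact pow_le_pow_left₀ (abs_nonneg _) hk1 5
    have b2 : |k₂^5| ≤ m^5 := by rw [abs_pow]; exact pow_le_pow_left₀ (abs_nonneg _) hk2 5
    have b3 : |k₃^5| ≤ m^5 := by rw [abs_pow]; exact pow_le_pow_left₀ (abs_nonneg _) hk3 5
    have b4 : |k₄^5| ≤ m^5 := by rw [abs_pow]; exact pow_le_pow_left₀ (abs_nonneg _) hk4 5
    calc |k₁^5+k₂^5+k₃^5+k₄^5| ≤ |k₁^5+k₂^5+k₃^5| + |k₄^5| := abs_add_le _ _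
      _ ≤ |k₁^5+k₂^5| + |k₃^5| + |k₄^5| := by gcongr; exact abs_add_le _ _
      _ ≤ |k₁^5| + |k₂^5| + |k₃^5| + |k₄^5| := by gcongr; exact abs_add_le _ _
      _ ≤ 4*m^5 := by linarith
  have hc3 : |k₁^3+k₂^3+k₃^3+k₄^3| ≤ 4*m^3 := by
    have b1 : |k₁^3| ≤ m^3 := by rw [abs_pow]; exact pow_le_pow_left₀ (abs_nonneg _) hk1 3
    have b2 : |k₂^3| ≤ m^3 := by rw [abs_pow]; exact pow_le_pow_left₀ (abs_nonneg _) hk2 3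
    have b3 : |k₃^3| ≤ m^3 := by rw [abs_pow]; exact pow_le_pow_left₀ (abs_nonneg _) hk3 3
    have b4 : |k₄^3| ≤ m^3 := by rw [abs_pow]; exact pow_le_pow_left₀ (abs_nonneg _) hk4 3
    calc |k₁^3+k₂^3+k₃^3+k₄^3| ≤ |k₁^3+k₂^3+k₃^3| + |k₄^3| := abs_add_le _ _
      _ ≤ |k₁^3+k₂^3| + |k₃^3| + |k₄^3| := by gcongr; exact abs_add_le _ _
      _ ≤ |k₁^3| + |k₂^3| + |k₃^3| + |k₄^3| := by gcongr; exact abs_add_le _ _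
      _ ≤ 4*m^3 := by linarith
  have hc : |((k₁^5+k₂^5+k₃^5+k₄^5 : ℤ) : ℝ)| ≤ 4*M^5 := by
    rw [hM_def, ← Int.cast_abs]
    exact_mod_cast hc5
  have hd : |((k₁^3+k₂^3+k₃^3+k₄^3 : ℤ) : ℝ)| ≤ 4*M^3 := by
    rw [hM_def, ← Int.cast_abs]
    exact_mod_cast hc3
  have hs_abs : |((k₁+k₂+k₃+k₄ : ℤ) : ℝ)| = S := by
    rw [hS_def]; push_cast; ring
  have ht_abs : |((k₅ : ℤ) : ℝ)| = N := by
    rw [hN_def]; push_cast; ring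
  -- bound on Q
  have hQb : |(((k₁+k₂+k₃+k₄+k₅)^3 - (k₁^3+k₂^3+k₃^3+k₄^3+k₅^3) : ℤ) : ℝ)|
      ≤ 4*S*N^2 + 4*M^3 := by
    have idQ : (((k₁+k₂+k₃+k₄+k₅)^3 - (k₁^3+k₂^3+k₃^3+k₄^3+k₅^3) : ℤ) : ℝ)
        = 3*((k₁+k₂+k₃+k₄ : ℤ):ℝ)*((k₅:ℤ):ℝ)^2 + 3*((k₁+k₂+k₃+k₄ : ℤ):ℝ)^2*((k₅:ℤ):ℝ)
          + ((k₁+k₂+k₃+k₄ : ℤ):ℝ)^3 - ((k₁^3+k₂^3+k₃^3+k₄^3 : ℤ):ℝ) := by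
      push_cast; ring
    rw [idQ]
    exact qbound _ _ _ S M N hs_abs ht_abs hd hS1 h128 hM1 h512
  -- bound on remainder of P
  have hRb : |(((k₁+k₂+k₃+k₄+k₅)^5 - (k₁^5+k₂^5+k₃^5+k₄^5+k₅^5) : ℤ) : ℝ)
      - 5*((k₁+k₂+k₃+k₄ : ℤ):ℝ)*((k₅:ℤ):ℝ)^4| ≤ S*N^4 := by
    have idP : (((k₁+k₂+k₃+k₄+k₅)^5 - (k₁^5+k₂^5+k₃^5+k₄^5+k₅^5) : ℤ) : ℝ)
        - 5*((k₁+k₂+k₃+k₄ : ℤ):ℝ)*((k₅:ℤ):ℝ)^4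
        = 10*((k₁+k₂+k₃+k₄ : ℤ):ℝ)^2*((k₅:ℤ):ℝ)^3 + 10*((k₁+k₂+k₃+k₄ : ℤ):ℝ)^3*((k₅:ℤ):ℝ)^2
          + 5*((k₁+k₂+k₃+k₄ : ℤ):ℝ)^4*((k₅:ℤ):ℝ) + ((k₁+k₂+k₃+k₄ : ℤ):ℝ)^5
          - ((k₁^5+k₂^5+k₃^5+k₄^5 : ℤ):ℝ) := by
      push_cast; ring
    rw [idP]
    exact pbound _ _ _ S M N hs_abs ht_abs hc hS1 h128 hM1 hM5
  have lowE : 3*(S*N^4) ≤ ‖Phi5 γ E k₁ k₂ k₃ k₄ k₅‖ := by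
    rw [abs_phi5]
    exact core_lower _ _ _ _ _ S M N hs_abs ht_abs hRb hQb hgE hS1 hM1 h512
  have lowF : 3*(S*N^4) ≤ ‖Phi5 γ F k₁ k₂ k₃ k₄ k₅‖ := by
    rw [abs_phi5]
    exact core_lower _ _ _ _ _ S M N hs_abs ht_abs hRb hQb hgF hS1 hM1 h512
  have hSN4 : 0 < S*N^4 := mul_pos (by linarith) (pow_pos hNpos 4)
  refine ⟨by linarith, by linarith, ?_⟩
  -- third part
  rw [hmax, ← hN_def]
  have hA : 0 < ‖Phi5 γ E k₁ k₂ k₃ k₄ k₅‖ := by linarith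
  have hB : 0 < ‖Phi5 γ F k₁ k₂ k₃ k₄ k₅‖ := by linarith
  have hEne : Phi5 γ E k₁ k₂ k₃ k₄ k₅ ≠ 0 := by
    intro h; rw [h] at hA; simp at hA
  have hFne : Phi5 γ F k₁ k₂ k₃ k₄ k₅ ≠ 0 := by
    intro h; rw [h] at hB; simp at hB
  have key : 2*|(((k₁+k₂+k₃+k₄+k₅)^3 - (k₁^3+k₂^3+k₃^3+k₄^3+k₅^3) : ℤ) : ℝ)| * N ≤ 3*(S*N^4) :=
    key_qn _ S M N (abs_nonneg _) hQb hS1 hM1 h512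
  have hkA : 2*|(((k₁+k₂+k₃+k₄+k₅)^3 - (k₁^3+k₂^3+k₃^3+k₄^3+k₅^3) : ℤ) : ℝ)| * N
      ≤ ‖Phi5 γ E k₁ k₂ k₃ k₄ k₅‖ := le_trans key lowE
  have hkB : 2*|(((k₁+k₂+k₃+k₄+k₅)^3 - (k₁^3+k₂^3+k₃^3+k₄^3+k₅^3) : ℤ) : ℝ)| * N
      ≤ ‖Phi5 γ F k₁ k₂ k₃ k₄ k₅‖ := le_trans key lowF
  have habsd : ‖Phi5 γ F k₁ k₂ k₃ k₄ k₅ - Phi5 γ E k₁ k₂ k₃ k₄ k₅‖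
      = 2 * |γ| * |E-F| * |(((k₁+k₂+k₃+k₄+k₅)^3 - (k₁^3+k₂^3+k₃^3+k₄^3+k₅^3) : ℤ) : ℝ)| := by
    rw [abs_phi5_diff γ F E, abs_sub_comm F E]
  rw [inv_sub_inv hEne hFne, norm_div, norm_mul, habsd]
  set Qa : ℝ := |(((k₁+k₂+k₃+k₄+k₅)^3 - (k₁^3+k₂^3+k₃^3+k₄^3+k₅^3) : ℤ) : ℝ)| with hQa_def
  set A : ℝ := ‖Phi5 γ E k₁ k₂ k₃ k₄ k₅‖ with hA_def
  set B : ℝ := ‖Phi5 γ F k₁ k₂ k₃ k₄ k₅‖ with hB_def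
  have hQa0 : 0 ≤ Qa := abs_nonneg _
  rcases le_total A B with hAB | hAB
  · have hmin : min A⁻¹ B⁻¹ = B⁻¹ := min_eq_right (by
      exact inv_anti₀ hA hAB)
    rw [hmin]
    have hstep : 2*Qa ≤ N⁻¹ * A := by
      rw [← div_eq_inv_mul, le_div_iff₀ hNpos]
      exact hkA
    calc 2 * |γ| * |E-F| * Qa / (A*B)
        = (|γ| * |E-F|) * (2*Qa) * (A⁻¹ * B⁻¹) := by rw [div_eq_mul_inv, mul_inv]; ring
      _ ≤ (|γ| * |E-F|) * (N⁻¹*A) * (A⁻¹ * B⁻¹) :=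
          mul_le_mul_of_nonneg_right (mul_le_mul_of_nonneg_left hstep (by positivity))
            (by positivity)
      _ = 1 * |γ| * |E-F| * N⁻¹ * B⁻¹ * (A * A⁻¹) := by ring
      _ = 1 * |γ| * |E-F| * N⁻¹ * B⁻¹ := by
          rw [mul_inv_cancel₀ (ne_of_gt hA), mul_one]
  · have hmin : min A⁻¹ B⁻¹ = A⁻¹ := min_eq_left (by
      exact inv_anti₀ hB hAB)
    rw [hmin]
    have hstep : 2*Qa ≤ N⁻¹ * B := by
      rw [← div_eq_inv_mul, le_div_iff₀ hNpos]
      exact hkB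
    calc 2 * |γ| * |E-F| * Qa / (A*B)
        = (|γ| * |E-F|) * (2*Qa) * (A⁻¹ * B⁻¹) := by rw [div_eq_mul_inv, mul_inv]; ring
      _ ≤ (|γ| * |E-F|) * (N⁻¹*B) * (A⁻¹ * B⁻¹) :=
          mul_le_mul_of_nonneg_right (mul_le_mul_of_nonneg_left hstep (by positivity))
            (by positivity)
      _ = 1 * |γ| * |E-F| * N⁻¹ * A⁻¹ * (B * B⁻¹) := by ring
      _ = 1 * |γ| * |E-F| * N⁻¹ * A⁻¹ := by
          rw [mul_inv_cancel₀ (ne_of_gt hB), mul_one]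
end

section
/- There exists a constant C > 0 such that the following holds for every γ ∈ ℝ, all real numbers E, F ≥ 0 and all integers k₁,…,k₇ with k_max > 16·max{1, |γ|E, |γ|F}: if either (|k₇| > 8⁵|k₆| and 8⁵|k₆| > 16·8⁵·max_{1≤j≤5}|k_j|) or (|k₇|^{4/5} > 8⁵·max_{1≤j≤6}|k_j| and k₁+⋯+k₆ ≠ 0), then |Φ_{γ,E}^{(7)}(k₁,…,k₇)| > |k₁+⋯+k₆|·|k₇|⁴, |Φ_{γ,F}^{(7)}(k₁,…,k₇)| > |k₁+⋯+k₆|·|k₇|⁴, and |1/Φ_{γ,E}^{(7)}(k₁,…,k₇) − 1/Φ_{γ,F}^{(7)}(k₁,…,k₇)| ≤ C·|γ|·|E−F|·k_max^{−1} · min{1/|Φ_{γ,E}^{(7)}(k₁,…,k₇)|, 1/|Φ_{γ,F}^{(7)}(k₁,…,k₇)|}. -/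
/-- The septic phase function `Φ_{γ,E}^{(7)}`. -/
noncomputable def Phi7 (γ E : ℝ) (k₁ k₂ k₃ k₄ k₅ k₆ k₇ : ℤ) : ℂ :=
  phiFn γ E (k₁ + k₂ + k₃ + k₄ + k₅ + k₆ + k₇) -
    (phiFn γ E k₁ + phiFn γ E k₂ + phiFn γ E k₃ + phiFn γ E k₄ +
      phiFn γ E k₅ + phiFn γ E k₆ + phiFn γ E k₇)

lemma core_ineq (X U S5 S3 : ℝ) (hX : 17 ≤ X) (hU1 : 1 ≤ U)
    (hUX : U ≤ 6 * X / 8 ^ 5)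
    (hS5 : S5 ≤ U * X ^ 4 / 8 ^ 10)
    (hS3 : S3 ≤ U * X ^ 2 + X ^ 3 / 8 ^ 14) (hS30 : 0 ≤ S3) :
    (10*U^2*X^3 + 10*U^3*X^2 + 5*U^4*X + U^5 + S5 ≤ U*X^4) ∧
      (2*X*(3*U*X^2 + 3*U^2*X + U^3 + S3) ≤ 3*U*X^4) := by
  have hX0 : (0:ℝ) < X := by linarith
  have hU0 : (0:ℝ) < U := by linarith
  have hc1 : U^2*X^3 ≤ (6/8^5)*(U*X^4) := by
    nlinarith [mul_le_mul_of_nonneg_right hUX (show (0:ℝ) ≤ U*X^3 by positivity)]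
  have hc2 : U^3*X^2 ≤ (6/8^5)*(U^2*X^3) := by
    nlinarith [mul_le_mul_of_nonneg_right hUX (show (0:ℝ) ≤ U^2*X^2 by positivity)]
  have hc3 : U^4*X ≤ (6/8^5)*(U^3*X^2) := by
    nlinarith [mul_le_mul_of_nonneg_right hUX (show (0:ℝ) ≤ U^3*X by positivity)]
  have hc4 : U^5 ≤ (6/8^5)*(U^4*X) := by
    nlinarith [mul_le_mul_of_nonneg_right hUX (show (0:ℝ) ≤ U^4 by positivity)]
  have hd : 17*(U*X^3) ≤ U*X^4 := by
    nlinarith [mul_le_mul_of_nonneg_right hX (show (0:ℝ) ≤ U*X^3 by positivity)]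
  have he : X^4 ≤ U*X^4 := by nlinarith [pow_pos hX0 4]
  have hd0 : 0 ≤ U*X^3 := by positivity
  constructor
  · nlinarith
  · nlinarith [mul_le_mul_of_nonneg_left hS3 (le_of_lt hX0)]

lemma phi7_repr (γ E : ℝ) (k₁ k₂ k₃ k₄ k₅ k₆ k₇ : ℤ) :
    Phi7 γ E k₁ k₂ k₃ k₄ k₅ k₆ k₇ =
      Complex.I * Complex.ofReal
        (-((((k₁+k₂+k₃+k₄+k₅+k₆+k₇)^5
          - (k₁^5+k₂^5+k₃^5+k₄^5+k₅^5+k₆^5+k₇^5) : ℤ) : ℝ))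
        + 2*γ*E*((((k₁+k₂+k₃+k₄+k₅+k₆+k₇)^3
          - (k₁^3+k₂^3+k₃^3+k₄^3+k₅^3+k₆^3+k₇^3) : ℤ) : ℝ))) := by
  simp only [Phi7, phiFn]
  push_cast
  ring

lemma abs_le_sum6 (x₁ x₂ x₃ x₄ x₅ x₆ : ℝ) :
    |x₁+x₂+x₃+x₄+x₅+x₆| ≤ |x₁|+|x₂|+|x₃|+|x₄|+|x₅|+|x₆| := by
  have a1 := abs_add_le x₁ x₂
  have a2 := abs_add_le (x₁+x₂) x₃
  have a3 := abs_add_le (x₁+x₂+x₃) x₄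
  have a4 := abs_add_le (x₁+x₂+x₃+x₄) x₅
  have a5 := abs_add_le (x₁+x₂+x₃+x₄+x₅) x₆
  linarith

lemma abs_le_sum5 (x₁ x₂ x₃ x₄ x₅ : ℝ) :
    |x₁+x₂+x₃+x₄+x₅| ≤ |x₁|+|x₂|+|x₃|+|x₄|+|x₅| := by
  have a1 := abs_add_le x₁ x₂
  have a2 := abs_add_le (x₁+x₂) x₃
  have a3 := abs_add_le (x₁+x₂+x₃) x₄
  have a4 := abs_add_le (x₁+x₂+x₃+x₄) x₅
  linarith

lemma int_abs_le_sum6 (x₁ x₂ x₃ x₄ x₅ x₆ : ℤ) :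
    |x₁+x₂+x₃+x₄+x₅+x₆| ≤ |x₁|+|x₂|+|x₃|+|x₄|+|x₅|+|x₆| := by
  have a1 := abs_add_le x₁ x₂
  have a2 := abs_add_le (x₁+x₂) x₃
  have a3 := abs_add_le (x₁+x₂+x₃) x₄
  have a4 := abs_add_le (x₁+x₂+x₃+x₄) x₅
  have a5 := abs_add_le (x₁+x₂+x₃+x₄+x₅) x₆
  linarith

set_option maxHeartbeats 3200000 in
theorem stmt6 :
    ∃ C : ℝ, 0 < C ∧
      ∀ (γ E F : ℝ) (k₁ k₂ k₃ k₄ k₅ k₆ k₇ : ℤ), 0 ≤ E → 0 ≤ F →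
        ((max |k₁| (max |k₂| (max |k₃| (max |k₄| (max |k₅| (max |k₆| |k₇|))))) : ℤ) : ℝ) >
          16 * max 1 (max (|γ| * E) (|γ| * F)) →
        ((|k₇| > 8 ^ 5 * |k₆| ∧
            8 ^ 5 * |k₆| > 16 * 8 ^ 5 * max |k₁| (max |k₂| (max |k₃| (max |k₄| |k₅|)))) ∨
          (((|k₇| : ℤ) : ℝ) ^ ((4 : ℝ) / 5) >
              8 ^ 5 * ((max |k₁| (max |k₂| (max |k₃| (max |k₄| (max |k₅| |k₆|)))) : ℤ) : ℝ) ∧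
            k₁ + k₂ + k₃ + k₄ + k₅ + k₆ ≠ 0)) →
        ‖Phi7 γ E k₁ k₂ k₃ k₄ k₅ k₆ k₇‖ >
          ((|k₁ + k₂ + k₃ + k₄ + k₅ + k₆| : ℤ) : ℝ) * ((|k₇| : ℤ) : ℝ) ^ 4 ∧
        ‖Phi7 γ F k₁ k₂ k₃ k₄ k₅ k₆ k₇‖ >
          ((|k₁ + k₂ + k₃ + k₄ + k₅ + k₆| : ℤ) : ℝ) * ((|k₇| : ℤ) : ℝ) ^ 4 ∧
        ‖(Phi7 γ E k₁ k₂ k₃ k₄ k₅ k₆ k₇)⁻¹ - (Phi7 γ F k₁ k₂ k₃ k₄ k₅ k₆ k₇)⁻¹‖ ≤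
          C * |γ| * |E - F| *
            (((max |k₁| (max |k₂| (max |k₃| (max |k₄| (max |k₅| (max |k₆| |k₇|))))) : ℤ) : ℝ))⁻¹ *
            min (‖Phi7 γ E k₁ k₂ k₃ k₄ k₅ k₆ k₇‖)⁻¹
              (‖Phi7 γ F k₁ k₂ k₃ k₄ k₅ k₆ k₇‖)⁻¹ := by
  refine ⟨1, one_pos, ?_⟩
  intro γ E F k₁ k₂ k₃ k₄ k₅ k₆ k₇ hE hF hK hcase
  -- abbreviations (opaque variables)
  obtain ⟨n, hn⟩ : ∃ m : ℤ, m = k₁ + k₂ + k₃ + k₄ + k₅ + k₆ := ⟨_, rfl⟩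
  obtain ⟨X, hXdef⟩ : ∃ y : ℝ, y = ((|k₇| : ℤ) : ℝ) := ⟨_, rfl⟩
  obtain ⟨U, hUdef⟩ : ∃ y : ℝ, y = ((|n| : ℤ) : ℝ) := ⟨_, rfl⟩
  obtain ⟨S5, hS5def⟩ : ∃ y : ℝ,
    y = |(k₁:ℝ)|^5+|(k₂:ℝ)|^5+|(k₃:ℝ)|^5+|(k₄:ℝ)|^5+|(k₅:ℝ)|^5+|(k₆:ℝ)|^5 := ⟨_, rfl⟩
  obtain ⟨S3, hS3def⟩ : ∃ y : ℝ,
    y = |(k₁:ℝ)|^3+|(k₂:ℝ)|^3+|(k₃:ℝ)|^3+|(k₄:ℝ)|^3+|(k₅:ℝ)|^3+|(k₆:ℝ)|^3 := ⟨_, rfl⟩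
  have hXabs : X = |(k₇:ℝ)| := by rw [hXdef, Int.cast_abs]
  have hUabs : U = |(n:ℝ)| := by rw [hUdef, Int.cast_abs]
  have hX0 : (0:ℝ) ≤ X := by rw [hXdef]; positivity
  have hU0 : (0:ℝ) ≤ U := by rw [hUdef]; positivity
  -- Step 1: case analysis, establishing the key structural facts
  have key : (max |k₁| (max |k₂| (max |k₃| (max |k₄| (max |k₅| (max |k₆| |k₇|))))) = |k₇|) ∧
      n ≠ 0 ∧ U ≤ 6 * X / 8 ^ 5 ∧ S5 ≤ U * X ^ 4 / 8 ^ 10 ∧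
      S3 ≤ U * X ^ 2 + X ^ 3 / 8 ^ 14 := by
    rcases hcase with ⟨h76, h65⟩ | ⟨h45, hn0⟩
    · -- Case 1
      obtain ⟨M₅, hM₅⟩ : ∃ m : ℤ, m = max |k₁| (max |k₂| (max |k₃| (max |k₄| |k₅|))) := ⟨_, rfl⟩
      rw [← hM₅] at h65
      have l1 : |k₁| ≤ M₅ := hM₅ ▸ le_max_left _ _
      have l2 : |k₂| ≤ M₅ := hM₅ ▸ le_trans (le_max_left _ _) (le_max_right _ _)
      have l3 : |k₃| ≤ M₅ := hM₅ ▸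
        le_trans (le_trans (le_max_left _ _) (le_max_right _ _)) (le_max_right _ _)
      have l4 : |k₄| ≤ M₅ := hM₅ ▸
        le_trans (le_trans (le_trans (le_max_left _ _) (le_max_right _ _))
          (le_max_right _ _)) (le_max_right _ _)
      have l5 : |k₅| ≤ M₅ := hM₅ ▸
        le_trans (le_trans (le_trans (le_max_right _ _) (le_max_right _ _))
          (le_max_right _ _)) (le_max_right _ _)
      clear hM₅
      have h65' : 16 * M₅ < |k₆| := by linarith
      have h76' : 8^5 * |k₆| < |k₇| := h76
      have a10 := abs_nonneg k₁; have a20 := abs_nonneg k₂; have a30 := abs_nonneg k₃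
      have a40 := abs_nonneg k₄; have a50 := abs_nonneg k₅; have a60 := abs_nonneg k₆
      have tup : |n| ≤ |k₁|+|k₂|+|k₃|+|k₄|+|k₅|+|k₆| := by
        rw [hn]; exact int_abs_le_sum6 k₁ k₂ k₃ k₄ k₅ k₆
      have tlo : |k₆| ≤ |n| + (|k₁|+|k₂|+|k₃|+|k₄|+|k₅|) := by
        have h1 : k₆ = n + (-k₁ + -k₂ + -k₃ + -k₄ + -k₅) := by rw [hn]; ring
        have h2 := int_abs_le_sum6 n (-k₁) (-k₂) (-k₃) (-k₄) (-k₅)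
        simp only [abs_neg] at h2
        calc |k₆| = |n + -k₁ + -k₂ + -k₃ + -k₄ + -k₅| := by rw [h1]; ring_nf
          _ ≤ |n|+|k₁|+|k₂|+|k₃|+|k₄|+|k₅| := h2
          _ = |n| + (|k₁|+|k₂|+|k₃|+|k₄|+|k₅|) := by ring
      have hub : 11 * |k₆| ≤ 16 * |n| := by linarith
      have hlb : |n| ≤ 2 * |k₆| := by linarith
      have hn0 : n ≠ 0 := by
        intro h0
        rw [h0, abs_zero] at tlo
        linarith
      have e6 : |k₆| ≤ |k₇| := by linarith
      have e1 : |k₁| ≤ |k₆| := by linarith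
      have e2 : |k₂| ≤ |k₆| := by linarith
      have e3 : |k₃| ≤ |k₆| := by linarith
      have e4 : |k₄| ≤ |k₆| := by linarith
      have e5 : |k₅| ≤ |k₆| := by linarith
      have hKmax : max |k₁| (max |k₂| (max |k₃| (max |k₄| (max |k₅| (max |k₆| |k₇|))))) = |k₇| := by
        rw [max_eq_right e6, max_eq_right (by linarith : |k₅| ≤ |k₇|),
          max_eq_right (by linarith : |k₄| ≤ |k₇|), max_eq_right (by linarith : |k₃| ≤ |k₇|),
          max_eq_right (by linarith : |k₂| ≤ |k₇|), max_eq_right (by linarith : |k₁| ≤ |k₇|)]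
      -- real versions
      obtain ⟨c, hc⟩ : ∃ y : ℝ, y = ((|k₆| : ℤ) : ℝ) := ⟨_, rfl⟩
      have hc0 : (0:ℝ) ≤ c := by rw [hc]; positivity
      have hcU : 11 * c ≤ 16 * U := by rw [hc, hUdef]; exact_mod_cast hub
      have hUc : U ≤ 2 * c := by rw [hc, hUdef]; exact_mod_cast hlb
      have hcX : 8^5 * c < X := by
        rw [hc, hXdef]; exact_mod_cast h76'
      have hU1 : (1:ℝ) ≤ U := by rw [hUdef]; exact_mod_cast Int.one_le_abs hn0
      have hXpos : (0:ℝ) < X := by linarith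
      have habs : ∀ j : ℤ, |j| ≤ |k₆| → |(j:ℝ)| ≤ c := by
        intro j hj; rw [hc, ← Int.cast_abs]; exact_mod_cast hj
      have b1 := habs _ e1; have b2 := habs _ e2; have b3 := habs _ e3
      have b4 := habs _ e4; have b5 := habs _ e5
      have b6 : |(k₆:ℝ)| ≤ c := by rw [hc, ← Int.cast_abs]
      have p5 : ∀ y : ℝ, |y| ≤ c → |y|^5 ≤ c^5 := fun y hy => pow_le_pow_left₀ (abs_nonneg y) hy 5
      have p3 : ∀ y : ℝ, |y| ≤ c → |y|^3 ≤ c^3 := fun y hy => pow_le_pow_left₀ (abs_nonneg y) hy 3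
      have hS5c : S5 ≤ 6 * c^5 := by
        rw [hS5def]
        have := p5 _ b1; have := p5 _ b2; have := p5 _ b3
        have := p5 _ b4; have := p5 _ b5; have := p5 _ b6
        linarith
      have hS3c : S3 ≤ 6 * c^3 := by
        rw [hS3def]
        have := p3 _ b1; have := p3 _ b2; have := p3 _ b3
        have := p3 _ b4; have := p3 _ b5; have := p3 _ b6
        linarith
      have hc4 : 8^20 * c^4 ≤ X^4 := by
        have := pow_le_pow_left₀ (by positivity : (0:ℝ) ≤ 8^5*c) hcX.le 4
        nlinarith [this]
      have hc2 : 8^10 * c^2 ≤ X^2 := by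
        have := pow_le_pow_left₀ (by positivity : (0:ℝ) ≤ 8^5*c) hcX.le 2
        nlinarith [this]
      refine ⟨hKmax, hn0, by linarith, ?_, ?_⟩
      · -- S5 ≤ U X⁴/8¹⁰
        have m1 : c * c^4 ≤ (16/11*U) * c^4 :=
          mul_le_mul_of_nonneg_right (by linarith) (by positivity)
        have m2 : (16/11*U) * c^4 ≤ (16/11*U) * (X^4/8^20) :=
          mul_le_mul_of_nonneg_left (by linarith) (by linarith)
        have hUX4 : (0:ℝ) ≤ U * X^4 := by positivity
        nlinarith [m1, m2, hS5c]
      · -- S3 ≤ U X² + ...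
        have m1 : c * c^2 ≤ (16/11*U) * c^2 :=
          mul_le_mul_of_nonneg_right (by linarith) (by positivity)
        have m2 : (16/11*U) * c^2 ≤ (16/11*U) * (X^2/8^10) :=
          mul_le_mul_of_nonneg_left (by linarith) (by linarith)
        have hUX2 : (0:ℝ) ≤ U * X^2 := by positivity
        have hX3 : (0:ℝ) ≤ X^3 := by positivity
        nlinarith [m1, m2, hS3c]
    · -- Case 2
      obtain ⟨M₆, hM₆⟩ : ∃ m : ℤ,
        m = max |k₁| (max |k₂| (max |k₃| (max |k₄| (max |k₅| |k₆|)))) := ⟨_, rfl⟩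
      rw [← hM₆] at h45
      rw [← hXdef] at h45
      obtain ⟨M, hM⟩ : ∃ y : ℝ, y = ((M₆ : ℤ) : ℝ) := ⟨_, rfl⟩
      rw [← hM] at h45
      have l1 : |k₁| ≤ M₆ := hM₆ ▸ le_max_left _ _
      have l2 : |k₂| ≤ M₆ := hM₆ ▸ le_trans (le_max_left _ _) (le_max_right _ _)
      have l3 : |k₃| ≤ M₆ := hM₆ ▸
        le_trans (le_trans (le_max_left _ _) (le_max_right _ _)) (le_max_right _ _)
      have l4 : |k₄| ≤ M₆ := hM₆ ▸
        le_trans (le_trans (le_trans (le_max_left _ _) (le_max_right _ _))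
          (le_max_right _ _)) (le_max_right _ _)
      have l5 : |k₅| ≤ M₆ := hM₆ ▸
        le_trans (le_trans (le_trans (le_trans (le_max_left _ _) (le_max_right _ _))
          (le_max_right _ _)) (le_max_right _ _)) (le_max_right _ _)
      have l6 : |k₆| ≤ M₆ := hM₆ ▸
        le_trans (le_trans (le_trans (le_trans (le_max_right _ _) (le_max_right _ _))
          (le_max_right _ _)) (le_max_right _ _)) (le_max_right _ _)
      clear hM₆
      have hM0 : (0:ℝ) ≤ M := by
        rw [hM]; exact_mod_cast le_trans (abs_nonneg k₁) l1
      have hXpos : (0:ℝ) < X := by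
        rcases lt_or_ge 0 X with h | h
        · exact h
        · exfalso
          have hX00 : X = 0 := le_antisymm h hX0
          rw [hX00, Real.zero_rpow (by norm_num : ((4:ℝ)/5) ≠ 0)] at h45
          nlinarith
      have hX1 : (1:ℝ) ≤ X := by
        have h0 : (0:ℤ) < |k₇| := by
          have : (0:ℝ) < ((|k₇|:ℤ):ℝ) := by rw [← hXdef]; exact hXpos
          exact_mod_cast this
        rw [hXdef]; exact_mod_cast (by omega : (1:ℤ) ≤ |k₇|)
      have h45X : X ^ ((4:ℝ)/5) ≤ X := by
        nth_rewrite 2 [← Real.rpow_one X]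
        exact Real.rpow_le_rpow_of_exponent_le hX1 (by norm_num)
      have hMX : 8^5 * M ≤ X := le_of_lt (lt_of_lt_of_le h45 h45X)
      have hpow : (X ^ ((4:ℝ)/5)) ^ (5:ℕ) = X ^ (4:ℕ) := by
        rw [← Real.rpow_natCast (X ^ ((4:ℝ)/5)) 5, ← Real.rpow_mul hX0,
          show ((4:ℝ)/5 * ((5:ℕ):ℝ)) = ((4:ℕ):ℝ) by norm_num, Real.rpow_natCast]
      have hM5 : 8^25 * M^5 ≤ X^4 := by
        have h1 : (8^5 * M)^5 ≤ (X ^ ((4:ℝ)/5))^(5:ℕ) :=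
          pow_le_pow_left₀ (by positivity) (le_of_lt h45) 5
        rw [hpow] at h1
        nlinarith [h1]
      have hM3 : 8^15 * M^3 ≤ X^3 := by
        have h1 : (8^5 * M)^3 ≤ X^3 := pow_le_pow_left₀ (by positivity) hMX 3
        nlinarith [h1]
      have hMlt : M₆ < |k₇| := by
        have hMX' : M < X := by nlinarith
        rw [hM, hXdef] at hMX'
        exact_mod_cast hMX'
      have hKmax : max |k₁| (max |k₂| (max |k₃| (max |k₄| (max |k₅| (max |k₆| |k₇|))))) = |k₇| := by
        rw [max_eq_right (by linarith : |k₆| ≤ |k₇|), max_eq_right (by linarith : |k₅| ≤ |k₇|),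
          max_eq_right (by linarith : |k₄| ≤ |k₇|), max_eq_right (by linarith : |k₃| ≤ |k₇|),
          max_eq_right (by linarith : |k₂| ≤ |k₇|), max_eq_right (by linarith : |k₁| ≤ |k₇|)]
      have hnM : |n| ≤ 6 * M₆ := by
        have tup : |n| ≤ |k₁|+|k₂|+|k₃|+|k₄|+|k₅|+|k₆| := by
          rw [hn]; exact int_abs_le_sum6 k₁ k₂ k₃ k₄ k₅ k₆
        linarith
      have hn0' : n ≠ 0 := by rw [hn]; exact hn0
      have hU1 : (1:ℝ) ≤ U := by
        rw [hUdef]; exact_mod_cast Int.one_le_abs hn0'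
      have hUM : U ≤ 6 * M := by rw [hUdef, hM]; exact_mod_cast hnM
      have habs : ∀ j : ℤ, |j| ≤ M₆ → |(j:ℝ)| ≤ M := by
        intro j hj; rw [hM, ← Int.cast_abs]; exact_mod_cast hj
      have b1 := habs _ l1; have b2 := habs _ l2; have b3 := habs _ l3
      have b4 := habs _ l4; have b5 := habs _ l5; have b6 := habs _ l6
      have p5 : ∀ y : ℝ, |y| ≤ M → |y|^5 ≤ M^5 := fun y hy => pow_le_pow_left₀ (abs_nonneg y) hy 5
      have p3 : ∀ y : ℝ, |y| ≤ M → |y|^3 ≤ M^3 := fun y hy => pow_le_pow_left₀ (abs_nonneg y) hy 3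
      have hS5M : S5 ≤ 6 * M^5 := by
        rw [hS5def]
        have := p5 _ b1; have := p5 _ b2; have := p5 _ b3
        have := p5 _ b4; have := p5 _ b5; have := p5 _ b6
        linarith
      have hS3M : S3 ≤ 6 * M^3 := by
        rw [hS3def]
        have := p3 _ b1; have := p3 _ b2; have := p3 _ b3
        have := p3 _ b4; have := p3 _ b5; have := p3 _ b6
        linarith
      refine ⟨hKmax, hn0', by linarith, ?_, ?_⟩
      · -- S5
        have hX4 : X^4 ≤ U * X^4 := by
          have := mul_le_mul_of_nonneg_right hU1 (by positivity : (0:ℝ) ≤ X^4)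
          linarith
        have hUX40 : (0:ℝ) ≤ U * X^4 := by positivity
        linarith
      · -- S3
        have h2 : (0:ℝ) ≤ U * X^2 := by positivity
        have h3 : (0:ℝ) ≤ X^3 := by positivity
        linarith
  obtain ⟨hKmax, hn0, hUX, hS5b, hS3b⟩ := key
  -- consequences of the size hypothesis hK
  rw [hKmax, ← hXdef] at hK
  have hX17 : (17:ℝ) ≤ X := by
    have h16 : (16:ℝ) < X := by
      have := le_max_left (1:ℝ) (max (|γ| * E) (|γ| * F))
      linarith
    rw [hXdef] at h16 ⊢
    have h17 : (16:ℤ) < |k₇| := by exact_mod_cast h16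
    exact_mod_cast (by linarith : (17:ℤ) ≤ |k₇|)
  have hgE : |γ| * E ≤ X / 16 := by
    have h1 : |γ| * E ≤ max 1 (max (|γ| * E) (|γ| * F)) :=
      le_trans (le_max_left _ _) (le_max_right _ _)
    linarith
  have hgF : |γ| * F ≤ X / 16 := by
    have h1 : |γ| * F ≤ max 1 (max (|γ| * E) (|γ| * F)) :=
      le_trans (le_max_right _ _) (le_max_right _ _)
    linarith
  have hU1 : (1:ℝ) ≤ U := by rw [hUdef]; exact_mod_cast Int.one_le_abs hn0
  have hS30 : (0:ℝ) ≤ S3 := by rw [hS3def]; positivity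
  obtain ⟨coreA, coreC⟩ := core_ineq X U S5 S3 hX17 hU1 hUX hS5b hS3b hS30
  -- decomposition bounds for A and B
  obtain ⟨A, hA⟩ : ∃ a : ℤ,
    a = (k₁+k₂+k₃+k₄+k₅+k₆+k₇)^5 - (k₁^5+k₂^5+k₃^5+k₄^5+k₅^5+k₆^5+k₇^5) := ⟨_, rfl⟩
  obtain ⟨B, hB⟩ : ∃ b : ℤ,
    b = (k₁+k₂+k₃+k₄+k₅+k₆+k₇)^3 - (k₁^3+k₂^3+k₃^3+k₄^3+k₅^3+k₆^3+k₇^3) := ⟨_, rfl⟩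
  obtain ⟨μ, hμ⟩ : ∃ y : ℝ, y = (n:ℝ) := ⟨_, rfl⟩
  obtain ⟨x, hx⟩ : ∃ y : ℝ, y = (k₇:ℝ) := ⟨_, rfl⟩
  have hUμ : |μ| = U := by rw [hμ]; exact hUabs.symm
  have hXx : |x| = X := by rw [hx]; exact hXabs.symm
  have habsA : 5*U*X^4 - (10*U^2*X^3 + 10*U^3*X^2 + 5*U^4*X + U^5 + S5) ≤ |(A:ℝ)| := by
    have e : (A:ℝ) - 5*μ*x^4 =
        10*μ^2*x^3 + 10*μ^3*x^2 + 5*μ^4*x + μ^5 +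
          (-((k₁:ℝ)^5+(k₂:ℝ)^5+(k₃:ℝ)^5+(k₄:ℝ)^5+(k₅:ℝ)^5+(k₆:ℝ)^5)) := by
      rw [hA, hμ, hx, hn]; push_cast; ring
    have t1 : |(A:ℝ) - 5*μ*x^4| ≤ 10*U^2*X^3 + 10*U^3*X^2 + 5*U^4*X + U^5 + S5 := by
      rw [e]
      have h0 := abs_le_sum5 (10*μ^2*x^3) (10*μ^3*x^2) (5*μ^4*x) (μ^5)
        (-((k₁:ℝ)^5+(k₂:ℝ)^5+(k₃:ℝ)^5+(k₄:ℝ)^5+(k₅:ℝ)^5+(k₆:ℝ)^5))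
      have g1 : |10*μ^2*x^3| = 10*U^2*X^3 := by
        rw [abs_mul, abs_mul, abs_pow, abs_pow, hUμ, hXx]; norm_num
      have g2 : |10*μ^3*x^2| = 10*U^3*X^2 := by
        rw [abs_mul, abs_mul, abs_pow, abs_pow, hUμ, hXx]; norm_num
      have g3 : |5*μ^4*x| = 5*U^4*X := by
        rw [abs_mul, abs_mul, abs_pow, hUμ, hXx]; norm_num
      have g4 : |μ^5| = U^5 := by rw [abs_pow, hUμ]
      have g5 : |(-((k₁:ℝ)^5+(k₂:ℝ)^5+(k₃:ℝ)^5+(k₄:ℝ)^5+(k₅:ℝ)^5+(k₆:ℝ)^5))| ≤ S5 := by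
        rw [abs_neg, hS5def]
        have := abs_le_sum6 ((k₁:ℝ)^5) ((k₂:ℝ)^5) ((k₃:ℝ)^5) ((k₄:ℝ)^5) ((k₅:ℝ)^5) ((k₆:ℝ)^5)
        simp only [abs_pow] at this
        linarith
      linarith [h0, g1.le, g2.le, g3.le, g4.le]
    have t2 : |5*μ*x^4| = 5*U*X^4 := by
      rw [abs_mul, abs_mul, abs_pow, hUμ, hXx]; norm_num
    have t3 := abs_sub_abs_le_abs_sub (5*μ*x^4) ((A:ℝ))
    rw [abs_sub_comm (5*μ*x^4) ((A:ℝ))] at t3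
    linarith
  have habsB : |(B:ℝ)| ≤ 3*U*X^2 + 3*U^2*X + U^3 + S3 := by
    have e : (B:ℝ) = 3*μ*x^2 + 3*μ^2*x + μ^3 +
        (-((k₁:ℝ)^3+(k₂:ℝ)^3+(k₃:ℝ)^3+(k₄:ℝ)^3+(k₅:ℝ)^3+(k₆:ℝ)^3)) + 0 := by
      rw [hB, hμ, hx, hn]; push_cast; ring
    rw [e]
    have h0 := abs_le_sum5 (3*μ*x^2) (3*μ^2*x) (μ^3)
      (-((k₁:ℝ)^3+(k₂:ℝ)^3+(k₃:ℝ)^3+(k₄:ℝ)^3+(k₅:ℝ)^3+(k₆:ℝ)^3)) (0:ℝ)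
    have g1 : |3*μ*x^2| = 3*U*X^2 := by
      rw [abs_mul, abs_mul, abs_pow, hUμ, hXx]; norm_num
    have g2 : |3*μ^2*x| = 3*U^2*X := by
      rw [abs_mul, abs_mul, abs_pow, hUμ, hXx]; norm_num
    have g3 : |μ^3| = U^3 := by rw [abs_pow, hUμ]
    have g5 : |(-((k₁:ℝ)^3+(k₂:ℝ)^3+(k₃:ℝ)^3+(k₄:ℝ)^3+(k₅:ℝ)^3+(k₆:ℝ)^3))| ≤ S3 := by
      rw [abs_neg, hS3def]
      have := abs_le_sum6 ((k₁:ℝ)^3) ((k₂:ℝ)^3) ((k₃:ℝ)^3) ((k₄:ℝ)^3) ((k₅:ℝ)^3) ((k₆:ℝ)^3)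
      simp only [abs_pow] at this
      linarith
    simp only [abs_zero] at h0
    linarith [h0, g1.le, g2.le, g3.le]
  -- lower bound for |Φ| (for a general coefficient G)
  have lower : ∀ G : ℝ, 0 ≤ G → |γ| * G ≤ X/16 →
      3*U*X^4 ≤ ‖Phi7 γ G k₁ k₂ k₃ k₄ k₅ k₆ k₇‖ := by
    intro G hG hγG
    rw [phi7_repr, norm_mul, Complex.norm_I, one_mul, Complex.norm_real, Real.norm_eq_abs]
    rw [← hA, ← hB]
    have hc : |2*γ*G*(B:ℝ)| ≤ (X/8) * (3*U*X^2 + 3*U^2*X + U^3 + S3) := by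
      have e1 : |2*γ*G*(B:ℝ)| = 2 * |γ| * G * |(B:ℝ)| := by
        rw [abs_mul, abs_mul, abs_mul, abs_of_nonneg hG]; norm_num
      rw [e1]
      have hb0 := abs_nonneg ((B:ℝ))
      have step1 : 2 * |γ| * G * |(B:ℝ)| ≤ 2*(X/16) * |(B:ℝ)| := by
        apply mul_le_mul_of_nonneg_right _ hb0
        nlinarith [abs_nonneg γ]
      have step2 : (X/8) * |(B:ℝ)| ≤ (X/8) * (3*U*X^2 + 3*U^2*X + U^3 + S3) := by
        apply mul_le_mul_of_nonneg_left habsB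
        linarith
      calc 2 * |γ| * G * |(B:ℝ)| ≤ 2*(X/16) * |(B:ℝ)| := step1
        _ = (X/8) * |(B:ℝ)| := by ring
        _ ≤ (X/8) * (3*U*X^2 + 3*U^2*X + U^3 + S3) := step2
    have tri := abs_sub_abs_le_abs_sub ((A:ℝ)) (2*γ*G*(B:ℝ))
    have e2 : |(A:ℝ) - 2*γ*G*(B:ℝ)| = |-(A:ℝ) + 2*γ*G*(B:ℝ)| := by
      rw [← abs_neg]; ring_nf
    have hfin : (X/8) * (3*U*X^2 + 3*U^2*X + U^3 + S3) ≤ (3/16)*(U*X^4) := by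
      nlinarith [coreC]
    rw [e2] at tri
    linarith [abs_nonneg (2*γ*G*(B:ℝ))]
  have hlE := lower E hE hgE
  have hlF := lower F hF hgF
  have hUX4pos : (0:ℝ) < U * X^4 := by
    have : (0:ℝ) < X := by linarith
    positivity
  have hRHS : ((|k₁ + k₂ + k₃ + k₄ + k₅ + k₆| : ℤ) : ℝ) * ((|k₇| : ℤ) : ℝ) ^ 4 = U * X^4 := by
    rw [hUdef, hXdef, hn]
  refine ⟨?_, ?_, ?_⟩
  · rw [hRHS]; linarith
  · rw [hRHS]; linarith
  · -- difference bound
    obtain ⟨aE, haE⟩ : ∃ y : ℝ, y = ‖Phi7 γ E k₁ k₂ k₃ k₄ k₅ k₆ k₇‖ := ⟨_, rfl⟩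
    obtain ⟨aF, haF⟩ : ∃ y : ℝ, y = ‖Phi7 γ F k₁ k₂ k₃ k₄ k₅ k₆ k₇‖ := ⟨_, rfl⟩
    rw [← haE] at hlE
    rw [← haF] at hlF
    have haE0 : 0 < aE := lt_of_lt_of_le (by linarith) hlE
    have haF0 : 0 < aF := lt_of_lt_of_le (by linarith) hlF
    have hneE : Phi7 γ E k₁ k₂ k₃ k₄ k₅ k₆ k₇ ≠ 0 := by
      intro h0; rw [haE, h0] at haE0; simp at haE0
    have hneF : Phi7 γ F k₁ k₂ k₃ k₄ k₅ k₆ k₇ ≠ 0 := by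
      intro h0; rw [haF, h0] at haF0; simp at haF0
    rw [hKmax, inv_sub_inv hneE hneF, norm_div, norm_mul, ← haE, ← haF, ← hXdef]
    have hdiff : Phi7 γ F k₁ k₂ k₃ k₄ k₅ k₆ k₇ - Phi7 γ E k₁ k₂ k₃ k₄ k₅ k₆ k₇ =
        Complex.I * Complex.ofReal (2*γ*(F-E)*(B:ℝ)) := by
      rw [phi7_repr, phi7_repr, hB]; push_cast; ring
    rw [hdiff, norm_mul, Complex.norm_I, one_mul, Complex.norm_real, Real.norm_eq_abs]
    have habs2 : |2*γ*(F-E)*(B:ℝ)| = 2 * |γ| * |E-F| * |(B:ℝ)| := by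
      rw [abs_mul, abs_mul, abs_mul, abs_sub_comm F E]; norm_num
    rw [habs2]
    have hXq : (0:ℝ) < X := by linarith
    have hkey : 2 * |(B:ℝ)| * X ≤ 3*U*X^4 := by
      have h1 : 2 * |(B:ℝ)| * X ≤ 2*X*(3*U*X^2+3*U^2*X+U^3+S3) := by
        nlinarith [abs_nonneg ((B:ℝ))]
      linarith [coreC]
    have hminmax : min aE⁻¹ aF⁻¹ = (max aE aF)⁻¹ := by
      rcases le_total aE aF with h | h
      · rw [max_eq_right h, min_eq_right (by exact inv_anti₀ haE0 h)]
      · rw [max_eq_left h, min_eq_left (by exact inv_anti₀ haF0 h)]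
    rw [hminmax, one_mul]
    rw [div_le_iff₀ (by positivity)]
    have hmm : |γ| * |E - F| * X⁻¹ * (max aE aF)⁻¹ * (aE * aF) =
        |γ| * |E - F| * (min aE aF / X) := by
      rcases le_total aE aF with h | h
      · rw [max_eq_right h, min_eq_left h]
        field_simp
      · rw [max_eq_left h, min_eq_right h]
        field_simp
    rw [hmm]
    have hminge : 2 * |(B:ℝ)| ≤ min aE aF / X := by
      rw [le_div_iff₀ hXq]
      have : 3*U*X^4 ≤ min aE aF := le_min hlE hlF
      linarith
    calc 2 * |γ| * |E-F| * |(B:ℝ)| = (|γ| * |E-F|) * (2 * |(B:ℝ)|) := by ring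
      _ ≤ (|γ| * |E-F|) * (min aE aF / X) := by
          apply mul_le_mul_of_nonneg_left hminge (by positivity)
      _ = |γ| * |E - F| * (min aE aF / X) := by ring
end

section
/- There exists a constant C > 0 such that for all integers k₁,…,k₅ with |k₅|^{3/5} > 8⁴·max_{1≤j≤4}|k_j| and k₁+k₂+k₃+k₄ ≠ 0, one has |Φ₀^{(5)}(k₁,…,k₅) + 5i·(k₁+k₂+k₃+k₄)·k₅⁴| ≤ C·(k₁+k₂+k₃+k₄)²·|k₅|³. Equivalently, Φ₀^{(5)}(k₁,…,k₅) = −5i·(k₁+k₂+k₃+k₄)·k₅⁴ + R₀(k₁,…,k₅) where the remainder R₀ satisfies |R₀(k₁,…,k₅)| ≤ C·(k₁+k₂+k₃+k₄)²·|k₅|³ in this regime. -/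
/-- The quintic phase function with zero cubic correction:
`Φ₀^{(5)}(k₁,…,k₅) = -i((k₁+⋯+k₅)⁵ - Σ_j k_j⁵)`. -/
noncomputable def Phi0_5 (k₁ k₂ k₃ k₄ k₅ : ℤ) : ℂ :=
  -Complex.I * (((k₁ + k₂ + k₃ + k₄ + k₅ : ℤ) : ℂ) ^ 5 -
    ((k₁ : ℂ) ^ 5 + (k₂ : ℂ) ^ 5 + (k₃ : ℂ) ^ 5 + (k₄ : ℂ) ^ 5 + (k₅ : ℂ) ^ 5))

set_option maxHeartbeats 1000000 in
theorem stmt8 :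
    ∃ C : ℝ, 0 < C ∧
      ∀ k₁ k₂ k₃ k₄ k₅ : ℤ,
        ((|k₅| : ℤ) : ℝ) ^ ((3 : ℝ) / 5) >
          8 ^ 4 * ((max |k₁| (max |k₂| (max |k₃| |k₄|)) : ℤ) : ℝ) →
        k₁ + k₂ + k₃ + k₄ ≠ 0 →
        ‖Phi0_5 k₁ k₂ k₃ k₄ k₅ +
            5 * Complex.I * ((k₁ + k₂ + k₃ + k₄ : ℤ) : ℂ) * (k₅ : ℂ) ^ 4‖ ≤
          C * ((k₁ + k₂ + k₃ + k₄ : ℤ) : ℝ) ^ 2 * ((|k₅| : ℤ) : ℝ) ^ 3 := by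
  refine ⟨30, by norm_num, fun k₁ k₂ k₃ k₄ k₅ h1 h2 => ?_⟩
  set m : ℝ := ((k₁ + k₂ + k₃ + k₄ : ℤ) : ℝ) with hm_def
  set x : ℝ := ((|k₅| : ℤ) : ℝ) with hx_def
  set M : ℝ := ((max |k₁| (max |k₂| (max |k₃| |k₄|)) : ℤ) : ℝ) with hM_def
  set t : ℝ := x ^ ((3:ℝ)/5) with ht_def
  have hx0 : 0 ≤ x := by positivity
  have hm1 : (1:ℝ) ≤ |m| := by
    have : (1:ℤ) ≤ |k₁ + k₂ + k₃ + k₄| := Int.one_le_abs h2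
    calc (1:ℝ) ≤ ((|k₁ + k₂ + k₃ + k₄| : ℤ) : ℝ) := by exact_mod_cast this
    _ = |m| := by push_cast [hm_def]; rfl
  have habs1 : |((k₁:ℤ):ℝ)| ≤ M := by
    calc |((k₁:ℤ):ℝ)| = ((|k₁|:ℤ):ℝ) := by push_cast; rfl
    _ ≤ M := by rw [hM_def]; exact_mod_cast le_max_left _ _
  have habs2 : |((k₂:ℤ):ℝ)| ≤ M := by
    calc |((k₂:ℤ):ℝ)| = ((|k₂|:ℤ):ℝ) := by push_cast; rfl
    _ ≤ M := by rw [hM_def]; exact_mod_cast le_trans (le_max_left _ _) (le_max_right _ _)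
  have habs3 : |((k₃:ℤ):ℝ)| ≤ M := by
    calc |((k₃:ℤ):ℝ)| = ((|k₃|:ℤ):ℝ) := by push_cast; rfl
    _ ≤ M := by
      rw [hM_def]
      exact_mod_cast le_trans (le_trans (le_max_left _ _) (le_max_right _ _)) (le_max_right _ _)
  have habs4 : |((k₄:ℤ):ℝ)| ≤ M := by
    calc |((k₄:ℤ):ℝ)| = ((|k₄|:ℤ):ℝ) := by push_cast; rfl
    _ ≤ M := by
      rw [hM_def]
      exact_mod_cast le_trans (le_trans (le_max_right _ _) (le_max_right _ _)) (le_max_right _ _)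
  have hmM : |m| ≤ 4 * M := by
    have h' : |m| ≤ |((k₁:ℤ):ℝ)| + |((k₂:ℤ):ℝ)| + |((k₃:ℤ):ℝ)| + |((k₄:ℤ):ℝ)| := by
      rw [hm_def]; push_cast
      exact le_trans (abs_add_le _ _) (add_le_add_left (le_trans (abs_add_le _ _)
        (add_le_add_left (abs_add_le _ _) _)) _)
    linarith
  have hM0 : 0 ≤ M := le_trans (abs_nonneg _) habs1
  have hmt : |m| ≤ t := by nlinarith [h1]
  have ht1 : 1 ≤ t := le_trans hm1 hmt
  have hMt : M ≤ t := by nlinarith [h1]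
  have ht5 : t ^ (5:ℕ) = x ^ (3:ℕ) := by
    rw [ht_def, ← Real.rpow_natCast (x ^ ((3:ℝ)/5)) 5, ← Real.rpow_mul hx0,
      ← Real.rpow_natCast x 3]
    norm_num
  have hx3 : (1:ℝ) ≤ x ^ 3 := by
    rw [← ht5]; exact one_le_pow₀ ht1
  have hx1 : 1 ≤ x := by nlinarith [hx3, hx0, sq_nonneg x, sq_nonneg (x - 1), sq_nonneg (x + 1)]
  have htx : t ≤ x := by
    rw [ht_def]
    nth_rewrite 2 [← Real.rpow_one x]
    exact Real.rpow_le_rpow_of_exponent_le hx1 (by norm_num)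
  -- the algebraic identity
  have hid : Phi0_5 k₁ k₂ k₃ k₄ k₅ +
      5 * Complex.I * ((k₁ + k₂ + k₃ + k₄ : ℤ) : ℂ) * (k₅ : ℂ) ^ 4 =
      -Complex.I * (10 * ((k₁ + k₂ + k₃ + k₄ : ℤ) : ℂ) ^ 2 * (k₅:ℂ) ^ 3 +
        10 * ((k₁ + k₂ + k₃ + k₄ : ℤ) : ℂ) ^ 3 * (k₅:ℂ) ^ 2 +
        5 * ((k₁ + k₂ + k₃ + k₄ : ℤ) : ℂ) ^ 4 * (k₅:ℂ) +
        ((k₁ + k₂ + k₃ + k₄ : ℤ) : ℂ) ^ 5 -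
        ((k₁ : ℂ) ^ 5 + (k₂ : ℂ) ^ 5 + (k₃ : ℂ) ^ 5 + (k₄ : ℂ) ^ 5)) := by
    rw [Phi0_5]; push_cast; ring
  rw [hid]
  -- abs facts
  have hSabs : ‖((k₁ + k₂ + k₃ + k₄ : ℤ) : ℂ)‖ = |m| := by
    rw [hm_def]; exact_mod_cast Complex.norm_intCast _
  have hKabs : ‖((k₅ : ℤ) : ℂ)‖ = x := by
    rw [hx_def]
    rw [Complex.norm_intCast]
    push_cast; rfl
  have hKabs' : ‖(k₅ : ℂ)‖ = x := by exact_mod_cast hKabs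
  set A : ℂ := 10 * ((k₁ + k₂ + k₃ + k₄ : ℤ) : ℂ) ^ 2 * (k₅:ℂ) ^ 3 with hA
  set B : ℂ := 10 * ((k₁ + k₂ + k₃ + k₄ : ℤ) : ℂ) ^ 3 * (k₅:ℂ) ^ 2 with hB
  set D : ℂ := 5 * ((k₁ + k₂ + k₃ + k₄ : ℤ) : ℂ) ^ 4 * (k₅:ℂ) with hD
  set E : ℂ := ((k₁ + k₂ + k₃ + k₄ : ℤ) : ℂ) ^ 5 with hE
  set F : ℂ := (k₁ : ℂ) ^ 5 + (k₂ : ℂ) ^ 5 + (k₃ : ℂ) ^ 5 + (k₄ : ℂ) ^ 5 with hF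
  have htri : ‖-Complex.I * (A + B + D + E - F)‖ ≤
      ‖A‖ + ‖B‖ + ‖D‖ + ‖E‖ + ‖F‖ := by
    rw [norm_mul, norm_neg, Complex.norm_I, one_mul]
    refine le_trans (norm_sub_le _ _) ?_
    gcongr ?_ + _
    refine le_trans (norm_add_le _ _) ?_
    gcongr ?_ + _
    refine le_trans (norm_add_le _ _) ?_
    gcongr ?_ + _
    exact norm_add_le _ _
  have hAval : ‖A‖ = 10 * |m| ^ 2 * x ^ 3 := by
    rw [hA, norm_mul, norm_mul, norm_pow, norm_pow, hSabs, hKabs']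
    norm_num
  have hBval : ‖B‖ = 10 * |m| ^ 3 * x ^ 2 := by
    rw [hB, norm_mul, norm_mul, norm_pow, norm_pow, hSabs, hKabs']
    norm_num
  have hDval : ‖D‖ = 5 * |m| ^ 4 * x := by
    rw [hD, norm_mul, norm_mul, norm_pow, hSabs, hKabs']
    norm_num
  have hEval : ‖E‖ = |m| ^ 5 := by rw [hE, norm_pow, hSabs]
  have hFval : ‖F‖ ≤ 4 * M ^ 5 := by
    rw [hF]
    have b1 : ‖(k₁:ℂ)^5‖ ≤ M ^ 5 := by
      rw [norm_pow]
      have : ‖(k₁:ℂ)‖ = |((k₁:ℤ):ℝ)| := by exact_mod_cast Complex.norm_intCast _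
      rw [this]; gcongr
    have b2 : ‖(k₂:ℂ)^5‖ ≤ M ^ 5 := by
      rw [norm_pow]
      have : ‖(k₂:ℂ)‖ = |((k₂:ℤ):ℝ)| := by exact_mod_cast Complex.norm_intCast _
      rw [this]; gcongr
    have b3 : ‖(k₃:ℂ)^5‖ ≤ M ^ 5 := by
      rw [norm_pow]
      have : ‖(k₃:ℂ)‖ = |((k₃:ℤ):ℝ)| := by exact_mod_cast Complex.norm_intCast _
      rw [this]; gcongr
    have b4 : ‖(k₄:ℂ)^5‖ ≤ M ^ 5 := by
      rw [norm_pow]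
      have : ‖(k₄:ℂ)‖ = |((k₄:ℤ):ℝ)| := by exact_mod_cast Complex.norm_intCast _
      rw [this]; gcongr
    calc ‖_‖ ≤ ‖(k₁:ℂ)^5‖ + ‖(k₂:ℂ)^5‖ +
        ‖(k₃:ℂ)^5‖ + ‖(k₄:ℂ)^5‖ :=
      le_trans (norm_add_le _ _) (add_le_add_left (le_trans
        (norm_add_le _ _) (add_le_add_left (norm_add_le _ _) _)) _)
    _ ≤ 4 * M ^ 5 := by linarith
  -- final estimates
  have hM5 : M ^ 5 ≤ x ^ 3 := by
    calc M ^ 5 ≤ t ^ 5 := by gcongr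
    _ = x ^ 3 := ht5
  have hmx : |m| ≤ x := hmt.trans htx
  have h2' : 10 * |m| ^ 3 * x ^ 2 ≤ 10 * |m| ^ 2 * x ^ 3 := by
    calc 10 * |m| ^ 3 * x ^ 2 = 10 * (|m| ^ 2 * x ^ 2) * |m| := by ring
    _ ≤ 10 * (|m| ^ 2 * x ^ 2) * x := by gcongr
    _ = 10 * |m| ^ 2 * x ^ 3 := by ring
  have h3' : 5 * |m| ^ 4 * x ≤ 5 * |m| ^ 2 * x ^ 3 := by
    calc 5 * |m| ^ 4 * x = 5 * (|m| ^ 2 * x) * |m| ^ 2 := by ring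
    _ ≤ 5 * (|m| ^ 2 * x) * x ^ 2 := by
        have := pow_le_pow_left₀ (abs_nonneg m) hmx 2
        have h0 : (0:ℝ) ≤ 5 * (|m| ^ 2 * x) := by positivity
        nlinarith [this, h0]
    _ = 5 * |m| ^ 2 * x ^ 3 := by ring
  have h4' : |m| ^ 5 ≤ |m| ^ 2 * x ^ 3 := by
    calc |m| ^ 5 = |m| ^ 2 * |m| ^ 3 := by ring
    _ ≤ |m| ^ 2 * x ^ 3 := by
        have := pow_le_pow_left₀ (abs_nonneg m) hmx 3
        have h0 : (0:ℝ) ≤ |m| ^ 2 := by positivity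
        nlinarith [this, h0]
  have hm2 : (1:ℝ) ≤ |m| ^ 2 := by nlinarith [hm1]
  have h5' : 4 * M ^ 5 ≤ 4 * (|m| ^ 2 * x ^ 3) := by nlinarith [hM5, hm2, hx3]
  have hmm : m ^ 2 = |m| ^ 2 := (sq_abs m).symm
  rw [hmm]
  calc ‖-Complex.I * (A + B + D + E - F)‖ ≤
      ‖A‖ + ‖B‖ + ‖D‖ + ‖E‖ + ‖F‖ := htri
  _ ≤ 10 * |m| ^ 2 * x ^ 3 + 10 * |m| ^ 3 * x ^ 2 + 5 * |m| ^ 4 * x + |m| ^ 5 + 4 * M ^ 5 := by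
      rw [hAval, hBval, hDval, hEval]; linarith
  _ ≤ 30 * |m| ^ 2 * x ^ 3 := by linarith
end
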